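/- arXiv:math/0501114 — 2 statements merged into one kernel-verified Lean document; each statement's English description precedes it below -/
import Mathlib

section
/- Let $\beta$ be a Schwartz function on $\mathbb{R}^d$ whose Fourier transform $\widehat\beta$ is supported in $\{x : |x| \le 1/4\}$ and with $\beta(0) = 0$, and let $B_k$ be convolution with $2^{kd}\widehat\beta(2^k \cdot)$ (i.e. $\widehat{B_k f}(\xi) = \beta(2^{-k}\xi)\widehat f(\xi)$). For $1 \le q < \infty$ and $s \ge 0$, and for all $f \in L^q_{loc}$ and a.e. $x$, $|\mathbb{E}_{k+1} B_{k+s} f(x)| + |\mathbb{E}_k B_{k+s} f(x)| \le C 2^{-s/q'} (M(|f|^q)(x))^{1/q}$, where $M$ is the Hardy–Littlewood maximal operator and $1/q + 1/q' = 1$. -/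
open MeasureTheory Metric ENNReal RealInnerProductSpace
open scoped FourierTransform

noncomputable section

abbrev Vd (d : ℕ) := EuclideanSpace ℝ (Fin d)

/-- Fourier transform, defined by the (Bochner) integral. -/
def FT {d : ℕ} (g : Vd d → ℂ) (ξ : Vd d) : ℂ :=
  ∫ x, Complex.exp (-(2 * Real.pi * ⟪x, ξ⟫) * Complex.I) * g x

/-- Hardy–Littlewood maximal function (of an `ℝ≥0∞`-valued function). -/
def HLMax {d : ℕ} (g : Vd d → ℝ≥0∞) (x : Vd d) : ℝ≥0∞ :=
  ⨆ (r : ℝ) (_ : 0 < r), (volume (ball x r))⁻¹ * ∫⁻ y in ball x r, g y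

/-- The dyadic cube of generation `k` containing `x`. -/
def dyadCube {d : ℕ} (k : ℤ) (x : Vd d) : Set (Vd d) :=
  {y | ∀ i, ⌊(2:ℝ) ^ k * y i⌋ = ⌊(2:ℝ) ^ k * x i⌋}

/-- Dyadic conditional expectation at generation `k`. -/
def Ek {d : ℕ} (k : ℤ) (f : Vd d → ℂ) (x : Vd d) : ℂ :=
  ((2:ℝ) ^ (k * (d : ℤ))) • ∫ y in dyadCube k x, f y

/-- Convolution with the `L¹`-rescaled kernel `2^{kd} K(2^k ·)`. -/
def scaledConv {d : ℕ} (K : Vd d → ℂ) (k : ℤ) (f : Vd d → ℂ) (x : Vd d) : ℂ :=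
  ∫ y, ((2:ℝ) ^ (k * (d : ℤ))) • K ((2:ℝ) ^ k • (x - y)) * f y

namespace Stmt7Aux

variable {d : ℕ}

/-! ### Elementary real lemmas -/

lemma pow_sub_pow_le {a b M : ℝ} (hb : 0 ≤ b) (hba : b ≤ a) (haM : a ≤ M) (n : ℕ) :
    a ^ n - b ^ n ≤ n * M ^ (n - 1) * (a - b) := by
  induction n with
  | zero => simp
  | succ n ih =>
    have hM : 0 ≤ M := le_trans (hb.trans hba) haM
    have hpow : b ^ n ≤ a ^ n := pow_le_pow_left₀ hb hba n
    have hbM : b ≤ M := hba.trans haM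
    have hpowM : b ^ n ≤ M ^ n := pow_le_pow_left₀ hb hbM n
    have key : a ^ (n+1) - b ^ (n+1) = a * (a ^ n - b ^ n) + (a - b) * b ^ n := by ring
    rw [key]
    have h1 : a * (a ^ n - b ^ n) ≤ M * (n * M ^ (n-1) * (a - b)) := by
      calc a * (a ^ n - b ^ n) ≤ M * (a ^ n - b ^ n) := by
            apply mul_le_mul_of_nonneg_right haM (by linarith)
        _ ≤ M * (n * M ^ (n-1) * (a - b)) := by
            apply mul_le_mul_of_nonneg_left ih hM
    have h2 : (a - b) * b ^ n ≤ (a - b) * M ^ n := by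
      apply mul_le_mul_of_nonneg_left hpowM (by linarith)
    have hMn : M * (n * M ^ (n-1) * (a-b)) = n * M ^ n * (a - b) := by
      cases n with
      | zero => simp
      | succ m => simp only [Nat.add_sub_cancel]; ring
    calc a * (a ^ n - b ^ n) + (a - b) * b ^ n
        ≤ n * M ^ n * (a - b) + (a - b) * M ^ n := by rw [← hMn]; exact add_le_add h1 h2
      _ = (↑(n+1)) * M ^ ((n+1) - 1) * (a - b) := by
          simp only [Nat.add_sub_cancel]; push_cast; ring

/-- For `0 ≤ x` and `0 ≤ r ≤ 1`, `x ^ r ≤ max 1 x`. -/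
lemma rpow_le_max_one {x r : ℝ} (hx : 0 ≤ x) (hr0 : 0 ≤ r) (hr1 : r ≤ 1) :
    x ^ r ≤ max 1 x := by
  rcases le_total x 1 with h | h
  · exact le_max_of_le_left (Real.rpow_le_one hx h hr0)
  · refine le_max_of_le_right ?_
    calc x ^ r ≤ x ^ (1:ℝ) := Real.rpow_le_rpow_of_exponent_le h hr1
      _ = x := Real.rpow_one x

/-! ### Kernel facts -/

lemma FT_eq (g : Vd d → ℂ) : FT g = 𝓕 g := by
  ext ξ
  rw [Real.fourier_eq']
  unfold FT
  congr 1
  ext x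
  rw [smul_eq_mul]
  norm_num

variable (β : SchwartzMap (Vd d) ℂ)

lemma FT_beta_eq : FT (β : Vd d → ℂ) = (SchwartzMap.fourierTransformCLM ℂ β : Vd d → ℂ) := by
  rw [FT_eq, SchwartzMap.fourierTransformCLM_apply, SchwartzMap.fourier_coe]

lemma K_cont : Continuous (FT (β : Vd d → ℂ)) := by
  rw [FT_beta_eq]; exact (SchwartzMap.fourierTransformCLM ℂ β).continuous

lemma K_bound : ∀ v, ‖FT (β : Vd d → ℂ) v‖ ≤
    (SchwartzMap.seminorm ℝ 0 0) (SchwartzMap.fourierTransformCLM ℂ β) := by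
  intro v
  rw [FT_beta_eq]
  exact SchwartzMap.norm_le_seminorm ℝ _ v

lemma K_int_zero (hβ0 : β 0 = 0) : ∫ v, FT (β : Vd d → ℂ) v = 0 := by
  have inv : 𝓕⁻ (𝓕 (β : Vd d → ℂ)) = (β : Vd d → ℂ) :=
    β.continuous.fourierInv_fourier_eq β.integrable
      (by rw [← SchwartzMap.fourier_coe]
          exact (SchwartzMap.fourierTransformCLM ℂ β).integrable)
  have h0 : 𝓕⁻ (𝓕 (β : Vd d → ℂ)) 0 = 0 := by rw [inv]; exact hβ0
  rw [Real.fourierInv_eq] at h0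
  simp only [inner_zero_right, Real.fourierChar_apply] at h0
  rw [FT_eq]
  simpa using h0

/-! ### Euclidean geometry and boxes -/

lemma abs_coord_le (y : Vd d) (i : Fin d) : |y i| ≤ ‖y‖ := by
  rw [EuclideanSpace.norm_eq, ← Real.sqrt_sq_eq_abs]
  apply Real.sqrt_le_sqrt
  have : (y i)^2 ≤ ∑ j, ‖y j‖^2 := by
    refine Finset.single_le_sum (f := fun j => ‖y j‖^2)
      (fun j _ => by positivity) (Finset.mem_univ i) |>.trans_eq' ?_
    simp [Real.norm_eq_abs, sq_abs]
  simpa using this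

lemma norm_le_of_coords {y : Vd d} {c : ℝ} (hc : 0 ≤ c) (h : ∀ i, |y i| ≤ c) :
    ‖y‖ ≤ Real.sqrt d * c := by
  rw [EuclideanSpace.norm_eq]
  have h1 : ∑ j, ‖y j‖^2 ≤ (d : ℝ) * c^2 := by
    calc ∑ j, ‖y j‖^2 ≤ ∑ _j : Fin d, c^2 := by
          refine Finset.sum_le_sum fun j _ => ?_
          rw [Real.norm_eq_abs, sq_abs, ← sq_abs]
          exact pow_le_pow_left₀ (abs_nonneg _) (h j) 2
      _ = (d : ℝ) * c^2 := by simp [mul_comm]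
  calc Real.sqrt (∑ j, ‖y j‖^2) ≤ Real.sqrt ((d:ℝ) * c^2) := Real.sqrt_le_sqrt h1
    _ = Real.sqrt d * c := by
        rw [Real.sqrt_mul (Nat.cast_nonneg d), Real.sqrt_sq hc]

lemma volume_box (S : Fin d → Set ℝ) (hS : ∀ i, MeasurableSet (S i)) :
    volume {y : Vd d | ∀ i, y i ∈ S i} = ∏ i, volume (S i) := by
  have h1 : {y : Vd d | ∀ i, y i ∈ S i}
      = (MeasurableEquiv.toLp 2 (Fin d → ℝ)).symm ⁻¹' (Set.univ.pi S) := by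
    ext y; simp [Set.mem_pi]
  rw [h1, (EuclideanSpace.volume_preserving_symm_measurableEquiv_toLp (Fin d)).measure_preimage
    (MeasurableSet.univ_pi hS).nullMeasurableSet]
  exact volume_pi_pi S

lemma measurable_box (S : Fin d → Set ℝ) (hS : ∀ i, MeasurableSet (S i)) :
    MeasurableSet {y : Vd d | ∀ i, y i ∈ S i} := by
  have h1 : {y : Vd d | ∀ i, y i ∈ S i} = ⋂ i, (fun y : Vd d => y i) ⁻¹' (S i) := by
    ext y; simp
  rw [h1]
  exact MeasurableSet.iInter fun i =>
    ((EuclideanSpace.proj (𝕜 := ℝ) i).continuous.measurable) (hS i)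

/-! ### Hölder on a set -/

lemma holder_set {α : Type*} [MeasurableSpace α] (μ : Measure α) (u : α → ℝ≥0∞)
    (hu : AEMeasurable u μ) {q : ℝ} (hq : 1 ≤ q) :
    ∫⁻ z, u z ∂μ ≤ (∫⁻ z, u z ^ q ∂μ) ^ (1/q) * (μ Set.univ) ^ (1 - 1/q) := by
  rcases eq_or_lt_of_le hq with h1 | h1
  · rw [← h1]
    simp [ENNReal.rpow_one]
  · have hpq := Real.HolderConjugate.conjExponent h1
    have key := ENNReal.lintegral_mul_le_Lp_mul_Lq μ hpq hu
      (aemeasurable_const (b := (1:ℝ≥0∞)))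
    simp only [Pi.mul_apply, mul_one, ENNReal.one_rpow, lintegral_one] at key
    have h1q : 1 / Real.conjExponent q = 1 - 1/q := by
      have := hpq.one_sub_inv
      rw [one_div, one_div, ← this]
    rwa [h1q] at key

end Stmt7Aux

/-! ### Constants -/

def CvolC (d : ℕ) : ℝ := max 1 ((2*(2*Real.sqrt d+2))^d)

def ClayC (d : ℕ) : ℝ := max 1 (8*d*3^(d-1))

namespace Stmt7Aux

lemma CvolC_pos : (1:ℝ) ≤ CvolC d := le_max_left _ _
lemma ClayC_pos : (1:ℝ) ≤ ClayC d := le_max_left _ _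

/-! ### The key estimate -/

/-- Coercion bound for complex norms. -/
lemma ennnorm_le_ofReal {z : ℂ} {C : ℝ} (h : ‖z‖ ≤ C) : (‖z‖₊ : ℝ≥0∞) ≤ ENNReal.ofReal C := by
  rw [← enorm_eq_nnnorm, ← ofReal_norm]; exact ENNReal.ofReal_le_ofReal h

lemma const_calc (d : ℕ) {q A : ℝ} (hq : 1 ≤ q) (hA0 : 0 ≤ A) {c1 X : ℝ}
    (hX : 0 < X) (hc1X : c1 * X = 1) {s : ℕ} :
    c1 * A * ((2*(2*Real.sqrt d+2))^d * X)^(1/q) *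
      ((8*d*3^(d-1)) * (X * (2:ℝ)^(-(s:ℝ)-1)))^(1-1/q)
      ≤ (A+1) * CvolC d * ClayC d * (2:ℝ)^(-(s:ℝ)*(1-1/q)) := by
  have hq0 : 0 < q := lt_of_lt_of_le one_pos hq
  have ha0 : 0 ≤ 1/q := by positivity
  have ha1 : 1/q ≤ 1 := by rw [div_le_one hq0]; exact hq
  set b : ℝ := 1 - 1/q with hbdef
  have hb0 : 0 ≤ b := by rw [hbdef]; linarith
  have hb1 : b ≤ 1 := by rw [hbdef]; linarith
  set V1 : ℝ := (2*(2*Real.sqrt d+2))^d with hV1def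
  have hsd : 0 ≤ Real.sqrt d := Real.sqrt_nonneg _
  have hV10 : 0 ≤ V1 := by rw [hV1def]; positivity
  set W : ℝ := (8*d*3^(d-1) : ℝ) with hWdef
  have hW0 : 0 ≤ W := by rw [hWdef]; positivity
  set E2 : ℝ := (2:ℝ)^(-(s:ℝ)-1) with hE2def
  have hE20 : 0 < E2 := Real.rpow_pos_of_pos two_pos _
  have hc10 : 0 ≤ c1 := by nlinarith
  rw [Real.mul_rpow hV10 hX.le, Real.mul_rpow hW0 (by positivity),
    Real.mul_rpow hX.le hE20.le]
  have hXX : X^(1/q) * X^b = X := by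
    rw [← Real.rpow_add hX]
    rw [hbdef]
    norm_num
  have hre : c1 * A * (V1^(1/q) * X^(1/q)) * (W^b * (X^b * E2^b))
      = (c1 * (X^(1/q) * X^b)) * (A * V1^(1/q) * W^b * E2^b) := by ring
  rw [hre, hXX, hc1X, one_mul]
  have hCv : CvolC d = 1 ⊔ V1 := by rw [hV1def]; rfl
  have hCl : ClayC d = 1 ⊔ W := by rw [hWdef]; rfl
  have hV1b : V1^(1/q) ≤ CvolC d := by rw [hCv]; exact rpow_le_max_one hV10 ha0 ha1
  have hWb : W^b ≤ ClayC d := by rw [hCl]; exact rpow_le_max_one hW0 hb0 hb1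
  have hE2b : E2^b ≤ (2:ℝ)^(-(s:ℝ)*b) := by
    rw [hE2def, ← Real.rpow_mul (by norm_num : (0:ℝ) ≤ 2)]
    apply Real.rpow_le_rpow_of_exponent_le one_le_two
    nlinarith
  have h1 : (1:ℝ) ≤ CvolC d := CvolC_pos
  have h2 : (1:ℝ) ≤ ClayC d := ClayC_pos
  have hV1b0 : 0 ≤ V1^(1/q) := Real.rpow_nonneg hV10 _
  have hWb0 : 0 ≤ W^b := Real.rpow_nonneg hW0 _
  have hE2b0 : 0 ≤ E2^b := Real.rpow_nonneg hE20.le _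
  calc A * V1^(1/q) * W^b * E2^b
      ≤ (A+1) * CvolC d * ClayC d * (2:ℝ)^(-(s:ℝ)*b) := by
        apply mul_le_mul _ hE2b hE2b0 (by positivity)
        apply mul_le_mul _ hWb hWb0 (by positivity)
        apply mul_le_mul (by linarith) hV1b hV1b0 (by linarith)
    _ = (A+1) * CvolC d * ClayC d * (2:ℝ)^(-(s:ℝ)*(1-1/q)) := by rw [hbdef]

set_option maxHeartbeats 2000000 in
lemma key (K : Vd d → ℂ) (hKc : Continuous K)
    (hKs : Function.support K ⊆ closedBall 0 (1/4))
    (hK0 : ∫ v, K v = 0) (A : ℝ) (hA0 : 0 ≤ A) (hA : ∀ v, ‖K v‖ ≤ A)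
    (q : ℝ) (hq : 1 ≤ q) (f : Vd d → ℂ) (hf : Measurable f)
    (hfq : LocallyIntegrable (fun y => ‖f y‖ ^ q) volume)
    (k m : ℤ) (s : ℕ) (hm : m ≤ k + 1) (x : Vd d) :
    (‖Ek m (scaledConv K (k + s) f) x‖₊ : ℝ≥0∞) ≤
      ENNReal.ofReal ((A+1) * CvolC d * ClayC d * (2:ℝ) ^ (-(s:ℝ) * (1 - 1/q))) *
        (HLMax (fun y => (‖f y‖₊ : ℝ≥0∞) ^ q) x) ^ (1/q) := by
  have hq0 : 0 < q := lt_of_lt_of_le one_pos hq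
  have hinva : (0:ℝ) ≤ 1/q := by positivity
  have hinva1 : 1/q ≤ 1 := by rw [div_le_one hq0]; exact hq
  have hinvb : (0:ℝ) ≤ 1 - 1/q := by linarith
  set j : ℤ := k + (s:ℤ) with hjdef
  set ℓ : ℝ := (2:ℝ) ^ (-m) with hldef
  have hℓ : 0 < ℓ := zpow_pos two_pos _
  set δ : ℝ := (2:ℝ) ^ (-j-2) with hddef
  have hδ : 0 < δ := zpow_pos two_pos _
  have hδℓ : 2*δ ≤ ℓ := by
    have h2 : (2:ℝ) ^ (-j-1) ≤ (2:ℝ) ^ (-m) := zpow_le_zpow_right₀ one_le_two (by omega)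
    calc 2*δ = (2:ℝ)^(1:ℤ) * (2:ℝ)^(-j-2) := by rw [hddef]; norm_num
      _ = (2:ℝ)^(-j-1) := by rw [← zpow_add₀ (two_ne_zero : (2:ℝ) ≠ 0)]; ring_nf
      _ ≤ ℓ := h2
  set a : Fin d → ℝ := fun i => (⌊(2:ℝ)^m * x i⌋ : ℝ) * ℓ with hadef
  have hai : ∀ i, a i = (⌊(2:ℝ)^m * x i⌋ : ℝ) * ℓ := fun i => rfl
  have hcℓ : (2:ℝ)^m * ℓ = 1 := by
    rw [hldef, ← zpow_add₀ (two_ne_zero : (2:ℝ) ≠ 0)]; simp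
  have hcpos : (0:ℝ) < (2:ℝ)^m := zpow_pos two_pos _
  -- cube characterization
  have hQiff : ∀ y : Vd d, y ∈ dyadCube m x ↔ ∀ i, a i ≤ y i ∧ y i < a i + ℓ := by
    intro y
    unfold dyadCube
    simp only [Set.mem_setOf_eq]
    refine forall_congr' fun i => ?_
    rw [Int.floor_eq_iff]
    set n : ℤ := ⌊(2:ℝ)^m * x i⌋
    constructor
    · rintro ⟨h1, h2⟩
      constructor
      · calc a i = (n:ℝ) * ℓ := hai i
          _ ≤ ((2:ℝ)^m * y i) * ℓ := mul_le_mul_of_nonneg_right h1 hℓ.le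
          _ = y i * ((2:ℝ)^m * ℓ) := by ring
          _ = y i := by rw [hcℓ, mul_one]
      · calc y i = (((2:ℝ)^m) * y i) * ℓ := by
              rw [mul_comm ((2:ℝ)^m) (y i), mul_assoc, hcℓ, mul_one]
          _ < ((n:ℝ) + 1) * ℓ := mul_lt_mul_of_pos_right h2 hℓ
          _ = a i + ℓ := by rw [hai i]; ring
    · rintro ⟨h1, h2⟩
      constructor
      · calc (n:ℝ) = ((n:ℝ) * ℓ) * (2:ℝ)^m := by
              rw [mul_assoc, mul_comm ℓ _, hcℓ, mul_one]
          _ ≤ y i * (2:ℝ)^m := by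
              apply mul_le_mul_of_nonneg_right _ hcpos.le
              rw [← hai i]; exact h1
          _ = (2:ℝ)^m * y i := mul_comm _ _
      · calc (2:ℝ)^m * y i < (2:ℝ)^m * (a i + ℓ) := by
              exact mul_lt_mul_of_pos_left h2 hcpos
          _ = (n:ℝ) * ((2:ℝ)^m * ℓ) + (2:ℝ)^m * ℓ := by rw [hai i]; ring
          _ = (n:ℝ) + 1 := by rw [hcℓ]; ring
  have hQbox : dyadCube m x = {y : Vd d | ∀ i, y i ∈ Set.Ico (a i) (a i + ℓ)} := by
    ext y; rw [hQiff y]; simp [Set.mem_Ico]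
  have hQmeas : MeasurableSet (dyadCube m x) := by
    rw [hQbox]; exact measurable_box _ (fun i => measurableSet_Ico)
  have hQvol : volume (dyadCube m x) = ENNReal.ofReal (ℓ^d) := by
    rw [hQbox, volume_box _ (fun i => measurableSet_Ico)]
    simp only [Real.volume_Ico, add_sub_cancel_left]
    rw [Finset.prod_const, ← ENNReal.ofReal_pow hℓ.le]
    simp
  have hxQ : x ∈ dyadCube m x := fun i => rfl
  set O : Set (Vd d) := {z | ∀ i, a i - 2*δ ≤ z i ∧ z i ≤ a i + ℓ + 2*δ} with hOdef
  set G : Set (Vd d) := {z | ∀ i, a i + 2*δ ≤ z i ∧ z i ≤ a i + ℓ - 2*δ} with hGdef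
  have hObox : O = {z : Vd d | ∀ i, z i ∈ Set.Icc (a i - 2*δ) (a i + ℓ + 2*δ)} := by
    rw [hOdef]; ext z; simp [Set.mem_Icc]
  have hGbox : G = {z : Vd d | ∀ i, z i ∈ Set.Icc (a i + 2*δ) (a i + ℓ - 2*δ)} := by
    rw [hGdef]; ext z; simp [Set.mem_Icc]
  have hOmeas : MeasurableSet O := by
    rw [hObox]; exact measurable_box _ (fun i => measurableSet_Icc)
  have hGmeas : MeasurableSet G := by
    rw [hGbox]; exact measurable_box _ (fun i => measurableSet_Icc)
  -- layer volume bound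
  set E2 : ℝ := (2:ℝ)^(-(s:ℝ)-1) with hE2def
  have hE20 : 0 < E2 := Real.rpow_pos_of_pos two_pos _
  have hdE : δ ≤ ℓ * E2 := by
    have h2 : δ ≤ (2:ℝ) ^ (-m + (-(s:ℤ)-1)) := by
      rw [hddef]
      apply zpow_le_zpow_right₀ one_le_two
      omega
    have h3 : (2:ℝ) ^ (-m + (-(s:ℤ)-1)) = ℓ * (2:ℝ)^(-(s:ℤ)-1) := by
      rw [zpow_add₀ (two_ne_zero : (2:ℝ) ≠ 0), hldef]
    have h4 : ((2:ℝ))^(-(s:ℤ)-1) = E2 := by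
      rw [hE2def, ← Real.rpow_intCast (2:ℝ) (-(s:ℤ)-1)]
      norm_num
    rw [h3, h4] at h2
    exact h2
  have hlayer : volume (O \ G) ≤ ENNReal.ofReal ((8*d*3^(d-1)) * (ℓ^d * E2)) := by
    have hGO : G ⊆ O := by
      intro z hz i
      obtain ⟨h1, h2⟩ := hz i
      constructor <;> nlinarith
    have hOvol : volume O = ENNReal.ofReal ((ℓ + 4*δ)^d) := by
      rw [hObox, volume_box _ (fun i => measurableSet_Icc)]
      simp only [Real.volume_Icc]
      have heq : ∀ i : Fin d, a i + ℓ + 2*δ - (a i - 2*δ) = ℓ + 4*δ := fun i => by ring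
      rw [Finset.prod_congr rfl (fun i _ => by rw [heq i]), Finset.prod_const,
        ← ENNReal.ofReal_pow (by linarith)]
      simp
    set b0 : ℝ := max (ℓ - 4*δ) 0 with hb0def
    have hb00 : 0 ≤ b0 := le_max_right _ _
    have hGvol : volume G = ENNReal.ofReal (b0^d) := by
      rw [hGbox, volume_box _ (fun i => measurableSet_Icc)]
      simp only [Real.volume_Icc]
      have heq : ∀ i : Fin d, ENNReal.ofReal (a i + ℓ - 2*δ - (a i + 2*δ))
          = ENNReal.ofReal b0 := by
        intro i
        rw [hb0def]
        rcases le_total (ℓ - 4*δ) 0 with h | h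
        · rw [max_eq_right h, ENNReal.ofReal_eq_zero.mpr (by linarith), ENNReal.ofReal_zero]
        · rw [max_eq_left h]; congr 1; ring
      rw [Finset.prod_congr rfl (fun i _ => heq i), Finset.prod_const,
        ← ENNReal.ofReal_pow hb00]
      simp
    have hGfin : volume G ≠ ⊤ := by rw [hGvol]; exact ENNReal.ofReal_ne_top
    rw [measure_diff hGO hGmeas.nullMeasurableSet hGfin, hOvol, hGvol,
      ← ENNReal.ofReal_sub _ (by positivity)]
    apply ENNReal.ofReal_le_ofReal
    have hstep : (ℓ + 4*δ)^d - b0^d ≤ d * (3*ℓ)^(d-1) * ((ℓ+4*δ) - b0) := by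
      apply pow_sub_pow_le hb00 _ (by linarith)
      apply max_le (by linarith) (by linarith)
    have hgap : (ℓ+4*δ) - b0 ≤ 8*δ := by
      have := le_max_left (ℓ - 4*δ) 0
      linarith
    calc (ℓ + 4*δ)^d - b0^d ≤ d * (3*ℓ)^(d-1) * ((ℓ+4*δ) - b0) := hstep
      _ ≤ d * (3*ℓ)^(d-1) * (8*δ) := by
          apply mul_le_mul_of_nonneg_left hgap (by positivity)
      _ ≤ (8*d*3^(d-1)) * (ℓ^d * E2) := by
          rcases Nat.eq_zero_or_pos d with hd0 | hd0
          · subst hd0; simp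
          · have hld : ℓ^(d-1) * ℓ = ℓ^d := by
              rw [← pow_succ]
              congr 1
              omega
            calc (d:ℝ) * (3*ℓ)^(d-1) * (8*δ)
                = 8*d*3^(d-1) * (ℓ^(d-1) * δ) := by rw [mul_pow]; ring
              _ ≤ 8*d*3^(d-1) * (ℓ^(d-1) * (ℓ * E2)) := by
                  apply mul_le_mul_of_nonneg_left _ (by positivity)
                  apply mul_le_mul_of_nonneg_left hdE (by positivity)
              _ = (8*d*3^(d-1)) * (ℓ^d * E2) := by rw [← hld]; ring
  -- ball covering
  set R : ℝ := ℓ * (2*Real.sqrt d + 2) with hRdef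
  have hsd0 : 0 ≤ Real.sqrt d := Real.sqrt_nonneg _
  have hR : 0 < R := by rw [hRdef]; nlinarith
  have hcoordQ : ∀ y ∈ dyadCube m x, ∀ i, |y i - x i| ≤ ℓ := by
    intro y hy i
    obtain ⟨h1, h2⟩ := (hQiff y).mp hy i
    obtain ⟨h3, h4⟩ := (hQiff x).mp hxQ i
    rw [abs_le]; constructor <;> linarith
  have hsub : ∀ (y z : Vd d) (i : Fin d), (y - z) i = y i - z i := fun y z i => rfl
  have hOball : O ⊆ ball x R := by
    intro z hz
    rw [mem_ball, dist_eq_norm]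
    have hco : ∀ i, |(z - x) i| ≤ 2*ℓ := by
      intro i
      rw [hsub]
      obtain ⟨h1, h2⟩ := hz i
      obtain ⟨h3, h4⟩ := (hQiff x).mp hxQ i
      rw [abs_le]; constructor <;> linarith
    calc ‖z - x‖ ≤ Real.sqrt d * (2*ℓ) := norm_le_of_coords (by linarith) hco
      _ < R := by rw [hRdef]; nlinarith
  have hballvol : volume (ball x R) ≤ ENNReal.ofReal ((2*(2*Real.sqrt d+2))^d * ℓ^d) := by
    have hsubball : ball x R ⊆ {y : Vd d | ∀ i, y i ∈ Set.Icc (x i - R) (x i + R)} := by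
      intro y hy i
      rw [mem_ball, dist_eq_norm] at hy
      have h5 := (abs_coord_le (y - x) i).trans hy.le
      rw [hsub, abs_le] at h5
      rw [Set.mem_Icc]
      constructor <;> linarith [h5.1, h5.2]
    calc volume (ball x R) ≤ volume {y : Vd d | ∀ i, y i ∈ Set.Icc (x i - R) (x i + R)} :=
          measure_mono hsubball
      _ = ENNReal.ofReal ((2*(2*Real.sqrt d+2))^d * ℓ^d) := by
          rw [volume_box _ (fun i => measurableSet_Icc)]
          simp only [Real.volume_Icc]
          have heq : ∀ i : Fin d, x i + R - (x i - R) = 2*R := fun i => by ring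
          rw [Finset.prod_congr rfl (fun i _ => by rw [heq i]), Finset.prod_const,
            ← ENNReal.ofReal_pow (by linarith)]
          have h2R : (2*R)^d = (2*(2*Real.sqrt d+2))^d * ℓ^d := by
            rw [hRdef, ← mul_pow]
            ring_nf
          rw [Finset.card_univ, Fintype.card_fin, h2R]
  -- kernel smallness
  set c2 : ℝ := (2:ℝ)^(j*(d:ℤ)) with hc2def
  have hc2 : 0 < c2 := zpow_pos two_pos _
  have hKnorm : ∀ v : Vd d, 2*δ ≤ ‖v‖ → K ((2:ℝ)^j • v) = 0 := by
    intro v hv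
    by_contra hne
    have hmem := hKs (Function.mem_support.mpr hne)
    rw [mem_closedBall, dist_zero_right] at hmem
    have hno : ‖(2:ℝ)^j • v‖ = (2:ℝ)^j * ‖v‖ := by
      rw [norm_smul, Real.norm_eq_abs, abs_of_pos (show (0:ℝ) < (2:ℝ)^j by positivity)]
    have hj2 : (2:ℝ)^j * (2*δ) = 1/2 := by
      rw [hddef]
      rw [show (2:ℝ) * (2:ℝ)^(-j-2:ℤ) = (2:ℝ)^(1:ℤ) * (2:ℝ)^(-j-2:ℤ) by norm_num,
        ← zpow_add₀ (two_ne_zero : (2:ℝ) ≠ 0), ← zpow_add₀ (two_ne_zero : (2:ℝ) ≠ 0)]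
      rw [show j + (1 + (-j - 2)) = -1 by ring]
      norm_num
    have hge : (1:ℝ)/2 ≤ ‖(2:ℝ)^j • v‖ := by
      rw [hno, ← hj2]
      apply mul_le_mul_of_nonneg_left hv (show (0:ℝ) ≤ (2:ℝ)^j by positivity)
    linarith
  have hKcoord : ∀ y z : Vd d, (∃ i, 2*δ ≤ |y i - z i|) → K ((2:ℝ)^j • (y - z)) = 0 := by
    rintro y z ⟨i, hi⟩
    apply hKnorm
    calc 2*δ ≤ |y i - z i| := hi
      _ = |(y - z) i| := by rw [hsub]
      _ ≤ ‖y - z‖ := abs_coord_le _ _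
  -- the function φ
  set φ : Vd d → ℂ := fun z => ∫ y in dyadCube m x, c2 • K ((2:ℝ)^j • (y - z)) with hphidef
  have hφO : ∀ z ∉ O, φ z = 0 := by
    intro z hz
    have hex : ∃ i, z i < a i - 2*δ ∨ a i + ℓ + 2*δ < z i := by
      by_contra hcon
      push_neg at hcon
      refine hz ?_
      rw [hOdef]
      exact fun i => ⟨(hcon i).1, (hcon i).2⟩
    obtain ⟨i, hi⟩ := hex
    have hzero : ∀ y ∈ dyadCube m x, c2 • K ((2:ℝ)^j • (y - z)) = (0:ℂ) := by
      intro y hy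
      obtain ⟨h1, h2⟩ := (hQiff y).mp hy i
      have habs : 2*δ ≤ |y i - z i| := by
        rcases hi with h | h
        · rw [abs_of_pos (by linarith)]; linarith
        · rw [abs_of_neg (by linarith)]; linarith
      rw [hKcoord y z ⟨i, habs⟩, smul_zero]
    have : φ z = ∫ _y in dyadCube m x, (0:ℂ) :=
      setIntegral_congr_fun hQmeas hzero
    rw [this, integral_zero]
  have hφG : ∀ z ∈ G, φ z = 0 := by
    intro z hz
    rw [hGdef] at hz
    have hout : ∀ y, y ∉ dyadCube m x → c2 • K ((2:ℝ)^j • (y - z)) = 0 := by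
      intro y hy
      rw [hQiff] at hy
      push_neg at hy
      obtain ⟨i, hi⟩ := hy
      obtain ⟨hg1, hg2⟩ := hz i
      have habs : 2*δ ≤ |y i - z i| := by
        rcases lt_or_ge (y i) (a i) with h | h
        · rw [abs_of_neg (by linarith)]; linarith
        · have h6 := hi h
          rw [abs_of_nonneg (by linarith)]; linarith
      rw [hKcoord y z ⟨i, habs⟩, smul_zero]
    have h7 : φ z = ∫ y, c2 • K ((2:ℝ)^j • (y - z)) :=
      setIntegral_eq_integral_of_forall_compl_eq_zero hout
    rw [h7, integral_smul]
    have htrans : (∫ y : Vd d, K ((2:ℝ)^j • (y - z))) = ∫ v : Vd d, K ((2:ℝ)^j • v) := by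
      have h8 := integral_add_right_eq_self (μ := volume) (fun v : Vd d => K ((2:ℝ)^j • v)) (-z)
      simp only [← sub_eq_add_neg] at h8
      exact h8
    rw [htrans, MeasureTheory.Measure.integral_comp_smul volume (fun v : Vd d => K v) ((2:ℝ)^j),
      hK0, smul_zero, smul_zero]
  have hφA : ∀ z, ‖φ z‖ ≤ A := by
    intro z
    have hind : ∀ y : Vd d, c2 • K ((2:ℝ)^j • (y - z))
        = (closedBall z (2*δ)).indicator (fun y => c2 • K ((2:ℝ)^j • (y - z))) y := by
      intro y
      by_cases hy : y ∈ closedBall z (2*δ)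
      · rw [Set.indicator_of_mem hy]
      · rw [Set.indicator_of_notMem hy]
        rw [mem_closedBall, dist_eq_norm] at hy
        push_neg at hy
        rw [hKnorm (y - z) hy.le, smul_zero]
    have hvolcb : volume (closedBall z (2*δ)) ≤ ENNReal.ofReal ((4*δ)^d) := by
      have hsubcb : closedBall z (2*δ)
          ⊆ {y : Vd d | ∀ i, y i ∈ Set.Icc (z i - 2*δ) (z i + 2*δ)} := by
        intro y hy i
        rw [mem_closedBall, dist_eq_norm] at hy
        have h5 := (abs_coord_le (y - z) i).trans hy
        rw [hsub, abs_le] at h5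
        rw [Set.mem_Icc]
        constructor <;> linarith [h5.1, h5.2]
      calc volume (closedBall z (2*δ)) ≤ _ := measure_mono hsubcb
        _ = ENNReal.ofReal ((4*δ)^d) := by
            rw [volume_box _ (fun i => measurableSet_Icc)]
            simp only [Real.volume_Icc]
            have heq : ∀ i : Fin d, z i + 2*δ - (z i - 2*δ) = 4*δ := fun i => by ring
            rw [Finset.prod_congr rfl (fun i _ => by rw [heq i]), Finset.prod_const,
              ← ENNReal.ofReal_pow (by linarith)]
            simp
    have hQcb : volume (dyadCube m x ∩ closedBall z (2*δ)) < ⊤ :=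
      lt_of_le_of_lt (le_trans (measure_mono Set.inter_subset_right) hvolcb)
        ENNReal.ofReal_lt_top
    have hre : φ z = ∫ y in dyadCube m x ∩ closedBall z (2*δ), c2 • K ((2:ℝ)^j • (y - z)) := by
      have h9 : φ z = ∫ y in dyadCube m x,
          (closedBall z (2*δ)).indicator (fun y => c2 • K ((2:ℝ)^j • (y - z))) y :=
        setIntegral_congr_fun hQmeas (fun y _ => hind y)
      rw [h9, setIntegral_indicator measurableSet_closedBall]
    rw [hre]
    have hbound := norm_setIntegral_le_of_norm_le_const (μ := volume) hQcb
      (f := fun y => c2 • K ((2:ℝ)^j • (y - z))) (C := c2 * A) ?_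
    · have hQcbvol : (volume (dyadCube m x ∩ closedBall z (2*δ))).toReal ≤ (4*δ)^d := by
        have h1 : volume (dyadCube m x ∩ closedBall z (2*δ)) ≤ ENNReal.ofReal ((4*δ)^d) :=
          le_trans (measure_mono Set.inter_subset_right) hvolcb
        calc (volume (dyadCube m x ∩ closedBall z (2*δ))).toReal
            ≤ (ENNReal.ofReal ((4*δ)^d)).toReal := ENNReal.toReal_mono ENNReal.ofReal_ne_top h1
          _ = (4*δ)^d := ENNReal.toReal_ofReal (by positivity)
      have hc24 : c2 * (4*δ)^d = 1 := by
        rw [hc2def, hddef]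
        have h4 : (4:ℝ) * (2:ℝ)^(-j-2:ℤ) = (2:ℝ)^(-j:ℤ) := by
          rw [show (4:ℝ) = (2:ℝ)^(2:ℤ) by norm_num,
            ← zpow_add₀ (two_ne_zero : (2:ℝ) ≠ 0)]
          ring_nf
        rw [h4, ← zpow_natCast ((2:ℝ)^(-j:ℤ)) d, ← zpow_mul,
          ← zpow_add₀ (two_ne_zero : (2:ℝ) ≠ 0)]
        norm_num [mul_comm]
      calc ‖∫ y in dyadCube m x ∩ closedBall z (2*δ), c2 • K ((2:ℝ)^j • (y - z))‖
          ≤ c2 * A * (volume (dyadCube m x ∩ closedBall z (2*δ))).toReal := hbound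
        _ ≤ c2 * A * (4*δ)^d := by
            apply mul_le_mul_of_nonneg_left hQcbvol (by positivity)
        _ = A * (c2 * (4*δ)^d) := by ring
        _ = A := by rw [hc24, mul_one]
    · intro y _
      rw [norm_smul, Real.norm_eq_abs, abs_of_pos hc2]
      exact mul_le_mul_of_nonneg_left (hA _) hc2.le
  -- integrability facts
  set u : Vd d → ℝ≥0∞ := fun z => (‖f z‖₊ : ℝ≥0∞) with hudef
  have hu : Measurable u := hf.nnnorm.coe_nnreal_ennreal
  have huz : ∀ z, u z = (‖f z‖₊ : ℝ≥0∞) := fun z => by rw [hudef]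
  have hnneq : ∀ z : Vd d, (‖(‖f z‖ ^ q)‖₊ : ℝ≥0∞) = u z ^ q := by
    intro z
    rw [← enorm_eq_nnnorm, Real.enorm_eq_ofReal (Real.rpow_nonneg (norm_nonneg _) _),
      ← ENNReal.ofReal_rpow_of_nonneg (norm_nonneg _) hq0.le]
    rw [hudef]
    congr 1
    exact ofReal_norm (f z)
  have hlocq : ∀ (c : Vd d) (r : ℝ), ∫⁻ z in ball c r, u z ^ q < ⊤ := by
    intro c r
    have hint : IntegrableOn (fun y => ‖f y‖^q) (closedBall c r) volume :=
      hfq.integrableOn_isCompact (isCompact_closedBall c r)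
    have hfin := hint.2
    rw [MeasureTheory.hasFiniteIntegral_def] at hfin
    calc ∫⁻ z in ball c r, u z ^ q ≤ ∫⁻ z in closedBall c r, u z ^ q :=
          lintegral_mono_set ball_subset_closedBall
      _ = ∫⁻ z in closedBall c r, (‖(‖f z‖ ^ q)‖₊ : ℝ≥0∞) :=
          lintegral_congr (fun z => (hnneq z).symm)
      _ < ⊤ := hfin
  have hloc1 : ∀ (c : Vd d) (r : ℝ), ∫⁻ z in ball c r, u z < ⊤ := by
    intro c r
    have hpt : ∀ z, u z ≤ 1 + u z ^ q := by
      intro z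
      rcases le_total (u z) 1 with h | h
      · exact le_trans h le_self_add
      · calc u z = u z ^ (1:ℝ) := (ENNReal.rpow_one _).symm
          _ ≤ u z ^ q := ENNReal.rpow_le_rpow_of_exponent_le h hq
          _ ≤ 1 + u z ^ q := le_add_self
    calc ∫⁻ z in ball c r, u z ≤ ∫⁻ z in ball c r, (1 + u z ^ q) := lintegral_mono hpt
      _ = volume (ball c r) + ∫⁻ z in ball c r, u z ^ q := by
          rw [lintegral_add_left measurable_const]
          simp
      _ < ⊤ := ENNReal.add_lt_top.mpr ⟨measure_ball_lt_top, hlocq c r⟩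
  -- Fubini
  have hswap : (∫ y in dyadCube m x, scaledConv K (k + (s:ℤ)) f y) = ∫ z, φ z * f z := by
    have hFcont : Continuous (fun p : Vd d × Vd d => c2 • K ((2:ℝ)^j • (p.1 - p.2))) :=
      (hKc.comp (((continuous_fst.sub continuous_snd)).const_smul ((2:ℝ)^j))).const_smul c2
    have hFmeas : Measurable (fun p : Vd d × Vd d => (c2 • K ((2:ℝ)^j • (p.1 - p.2))) * f p.2) :=
      hFcont.measurable.mul (hf.comp measurable_snd)
    have hFint : Integrable (fun p : Vd d × Vd d => (c2 • K ((2:ℝ)^j • (p.1 - p.2))) * f p.2)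
        ((volume.restrict (dyadCube m x)).prod volume) := by
      refine ⟨hFmeas.aestronglyMeasurable, ?_⟩
      rw [MeasureTheory.hasFiniteIntegral_def]
      rw [lintegral_prod _ hFmeas.enorm.aemeasurable]
      have hinner : ∀ y ∈ dyadCube m x,
          (∫⁻ z, (‖(c2 • K ((2:ℝ)^j • (y - z))) * f z‖₊ : ℝ≥0∞))
            ≤ ENNReal.ofReal (c2*A) * ∫⁻ z in ball x R, u z := by
        intro y hy
        have hycb : closedBall y (2*δ) ⊆ ball x R := by
          intro z hzz
          rw [mem_closedBall, dist_eq_norm] at hzz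
          rw [mem_ball, dist_eq_norm]
          have h1 : ‖y - x‖ ≤ Real.sqrt d * ℓ := by
            apply norm_le_of_coords hℓ.le
            intro i
            rw [hsub]
            exact hcoordQ y hy i
          calc ‖z - x‖ = ‖(z - y) + (y - x)‖ := by rw [sub_add_sub_cancel]
            _ ≤ ‖z - y‖ + ‖y - x‖ := norm_add_le _ _
            _ ≤ 2*δ + Real.sqrt d * ℓ := add_le_add hzz h1
            _ < R := by rw [hRdef]; nlinarith
        have hptb : ∀ z, (‖(c2 • K ((2:ℝ)^j • (y - z))) * f z‖₊ : ℝ≥0∞)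
            ≤ (ball x R).indicator (fun z => ENNReal.ofReal (c2*A) * u z) z := by
          intro z
          by_cases hz : z ∈ closedBall y (2*δ)
          · rw [Set.indicator_of_mem (hycb hz)]
            show (‖(c2 • K ((2:ℝ)^j • (y - z))) * f z‖₊ : ℝ≥0∞)
              ≤ ENNReal.ofReal (c2*A) * u z
            rw [nnnorm_mul, ENNReal.coe_mul, huz z]
            apply mul_le_mul_left
            apply ennnorm_le_ofReal
            rw [norm_smul, Real.norm_eq_abs, abs_of_pos hc2]
            exact mul_le_mul_of_nonneg_left (hA _) hc2.le
          · rw [mem_closedBall, dist_eq_norm] at hz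
            push_neg at hz
            rw [norm_sub_rev] at hz
            have hKz : K ((2:ℝ)^j • (y - z)) = 0 := hKnorm (y - z) hz.le
            rw [hKz, smul_zero, zero_mul]
            simp
        calc (∫⁻ z, (‖(c2 • K ((2:ℝ)^j • (y - z))) * f z‖₊ : ℝ≥0∞))
            ≤ ∫⁻ z, (ball x R).indicator (fun z => ENNReal.ofReal (c2*A) * u z) z :=
              lintegral_mono hptb
          _ = ∫⁻ z in ball x R, ENNReal.ofReal (c2*A) * u z :=
              lintegral_indicator measurableSet_ball _
          _ = ENNReal.ofReal (c2*A) * ∫⁻ z in ball x R, u z :=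
              lintegral_const_mul _ hu
      calc (∫⁻ y in dyadCube m x, ∫⁻ z, (‖(c2 • K ((2:ℝ)^j • (y - z))) * f z‖₊ : ℝ≥0∞))
          ≤ ∫⁻ _y in dyadCube m x, ENNReal.ofReal (c2*A) * ∫⁻ z in ball x R, u z :=
            setLIntegral_mono' hQmeas hinner
        _ = volume (dyadCube m x) * (ENNReal.ofReal (c2*A) * ∫⁻ z in ball x R, u z) := by
            rw [setLIntegral_const]
            ring
        _ < ⊤ := by
            apply ENNReal.mul_lt_top
            · rw [hQvol]; exact ENNReal.ofReal_lt_top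
            · exact ENNReal.mul_lt_top ENNReal.ofReal_lt_top (hloc1 x R)
    have hswap0 := MeasureTheory.integral_integral_swap
      (f := fun y z => (c2 • K ((2:ℝ)^j • (y - z))) * f z) hFint
    have hlhs : (∫ y in dyadCube m x, ∫ z, (c2 • K ((2:ℝ)^j • (y - z))) * f z)
        = ∫ y in dyadCube m x, scaledConv K (k + (s:ℤ)) f y := by
      apply setIntegral_congr_fun hQmeas
      intro y _
      rw [hc2def, hjdef]
      rfl
    have hrhs : (∫ z, ∫ y in dyadCube m x, (c2 • K ((2:ℝ)^j • (y - z))) * f z)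
        = ∫ z, φ z * f z := by
      apply integral_congr_ae
      apply Filter.Eventually.of_forall
      intro z
      rw [hphidef]
      exact integral_mul_const (f z) _
    rw [← hlhs, hswap0, hrhs]
  -- maximal function bound
  set M : ℝ≥0∞ := HLMax (fun y => u y ^ q) x with hMdef
  have hmax : ∫⁻ z in ball x R, u z ^ q ≤ volume (ball x R) * M := by
    have hle : (volume (ball x R))⁻¹ * ∫⁻ z in ball x R, u z ^ q ≤ M := by
      rw [hMdef]
      unfold HLMax
      exact le_iSup₂ (f := fun r (_ : 0 < r) =>
        (volume (ball x r))⁻¹ * ∫⁻ y in ball x r, u y ^ q) R hR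
    have hne0 : volume (ball x R) ≠ 0 := (measure_ball_pos volume x hR).ne'
    have hnetop : volume (ball x R) ≠ ⊤ := measure_ball_lt_top.ne
    calc ∫⁻ z in ball x R, u z ^ q
        = volume (ball x R) * ((volume (ball x R))⁻¹ * ∫⁻ z in ball x R, u z ^ q) := by
          rw [← mul_assoc, ENNReal.mul_inv_cancel hne0 hnetop, one_mul]
      _ ≤ volume (ball x R) * M := mul_le_mul_right hle _
  -- main chain
  set c1 : ℝ := (2:ℝ)^(m*(d:ℤ)) with hc1def
  have hc1 : 0 < c1 := zpow_pos two_pos _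
  have hc1X : c1 * ℓ^d = 1 := by
    rw [hc1def, hldef, ← zpow_natCast ((2:ℝ)^(-m : ℤ)) d, ← zpow_mul,
      ← zpow_add₀ (two_ne_zero : (2:ℝ) ≠ 0)]
    norm_num [mul_comm]
  have hEk : (‖Ek m (scaledConv K (k + (s:ℤ)) f) x‖₊ : ℝ≥0∞)
      = ENNReal.ofReal c1 * (‖∫ z, φ z * f z‖₊ : ℝ≥0∞) := by
    rw [← hswap]
    unfold Ek
    rw [← hc1def, nnnorm_smul, ENNReal.coe_mul, ← enorm_eq_nnnorm, Real.enorm_eq_ofReal hc1.le]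
  have hφpoint : ∀ z, (‖φ z‖₊ : ℝ≥0∞) * u z
      ≤ (O \ G).indicator (fun z => ENNReal.ofReal A * u z) z := by
    intro z
    by_cases hz : z ∈ O \ G
    · rw [Set.indicator_of_mem hz]
      show (‖φ z‖₊ : ℝ≥0∞) * u z ≤ ENNReal.ofReal A * u z
      exact mul_le_mul_left (ennnorm_le_ofReal (hφA z)) _
    · rw [Set.indicator_of_notMem hz]
      have hz0 : φ z = 0 := by
        rcases Classical.em (z ∈ O) with hO | hO
        · have hzG : z ∈ G := by
            by_contra hG
            exact hz ⟨hO, hG⟩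
          exact hφG z hzG
        · exact hφO z hO
      rw [hz0]
      simp
  have step1 : (‖∫ z, φ z * f z‖₊ : ℝ≥0∞) ≤ ∫⁻ z, (‖φ z‖₊ : ℝ≥0∞) * u z := by
    refine (enorm_integral_le_lintegral_enorm _).trans ?_
    apply lintegral_mono
    intro z
    show (‖φ z * f z‖₊ : ℝ≥0∞) ≤ (‖φ z‖₊ : ℝ≥0∞) * u z
    rw [nnnorm_mul, ENNReal.coe_mul, huz z]
  have step2 : ∫⁻ z, (‖φ z‖₊ : ℝ≥0∞) * u z ≤ ENNReal.ofReal A * ∫⁻ z in O \ G, u z := by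
    calc ∫⁻ z, (‖φ z‖₊ : ℝ≥0∞) * u z
        ≤ ∫⁻ z, (O \ G).indicator (fun z => ENNReal.ofReal A * u z) z :=
          lintegral_mono hφpoint
      _ = ∫⁻ z in O \ G, ENNReal.ofReal A * u z :=
          lintegral_indicator (hOmeas.diff hGmeas) _
      _ = ENNReal.ofReal A * ∫⁻ z in O \ G, u z := lintegral_const_mul _ hu
  have step3 : ∫⁻ z in O \ G, u z
      ≤ (∫⁻ z in O \ G, u z ^ q)^(1/q) * (volume (O \ G))^(1-1/q) := by
    have h10 := holder_set (volume.restrict (O \ G)) u hu.aemeasurable hq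
    rwa [Measure.restrict_apply_univ] at h10
  have step4 : (∫⁻ z in O \ G, u z ^ q)^(1/q)
      ≤ (ENNReal.ofReal ((2*(2*Real.sqrt d+2))^d * ℓ^d))^(1/q) * M^(1/q) := by
    have h1 : ∫⁻ z in O \ G, u z ^ q ≤ ∫⁻ z in ball x R, u z ^ q :=
      lintegral_mono_set (fun z hz => hOball hz.1)
    have h2 : ∫⁻ z in O \ G, u z ^ q
        ≤ ENNReal.ofReal ((2*(2*Real.sqrt d+2))^d * ℓ^d) * M :=
      h1.trans (hmax.trans (mul_le_mul_left hballvol M))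
    calc (∫⁻ z in O \ G, u z ^ q)^(1/q)
        ≤ (ENNReal.ofReal ((2*(2*Real.sqrt d+2))^d * ℓ^d) * M)^(1/q) :=
          ENNReal.rpow_le_rpow h2 hinva
      _ = (ENNReal.ofReal ((2*(2*Real.sqrt d+2))^d * ℓ^d))^(1/q) * M^(1/q) :=
          ENNReal.mul_rpow_of_nonneg _ _ hinva
  have step5 : (volume (O \ G))^(1-1/q)
      ≤ (ENNReal.ofReal ((8*d*3^(d-1)) * (ℓ^d * E2)))^(1-1/q) :=
    ENNReal.rpow_le_rpow hlayer hinvb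
  -- put it together
  rw [hEk]
  have hexp : ENNReal.ofReal (c1 * A * ((2*(2*Real.sqrt d+2))^d * ℓ^d)^(1/q) *
        ((8*d*3^(d-1)) * (ℓ^d * E2))^(1-1/q))
      = ENNReal.ofReal c1 * ENNReal.ofReal A *
        ENNReal.ofReal (((2*(2*Real.sqrt d+2))^d * ℓ^d)^(1/q)) *
        ENNReal.ofReal (((8*d*3^(d-1)) * (ℓ^d * E2))^(1-1/q)) := by
    rw [ENNReal.ofReal_mul (by positivity), ENNReal.ofReal_mul (by positivity),
      ENNReal.ofReal_mul hc1.le]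
  calc ENNReal.ofReal c1 * (‖∫ z, φ z * f z‖₊ : ℝ≥0∞)
      ≤ ENNReal.ofReal c1 * (ENNReal.ofReal A *
          ((∫⁻ z in O \ G, u z ^ q)^(1/q) * (volume (O \ G))^(1-1/q))) := by
        apply mul_le_mul_right
        exact (step1.trans step2).trans (mul_le_mul_right step3 _)
    _ ≤ ENNReal.ofReal c1 * (ENNReal.ofReal A *
          (((ENNReal.ofReal ((2*(2*Real.sqrt d+2))^d * ℓ^d))^(1/q) * M^(1/q)) *
            (ENNReal.ofReal ((8*d*3^(d-1)) * (ℓ^d * E2)))^(1-1/q))) := by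
        apply mul_le_mul_right
        apply mul_le_mul_right
        exact mul_le_mul' step4 step5
    _ = ENNReal.ofReal (c1 * A * ((2*(2*Real.sqrt d+2))^d * ℓ^d)^(1/q) *
          ((8*d*3^(d-1)) * (ℓ^d * E2))^(1-1/q)) * M^(1/q) := by
        rw [hexp,
          ENNReal.ofReal_rpow_of_nonneg (by positivity) hinva,
          ENNReal.ofReal_rpow_of_nonneg (by positivity) hinvb]
        ring
    _ ≤ ENNReal.ofReal ((A+1) * CvolC d * ClayC d * (2:ℝ) ^ (-(s:ℝ) * (1 - 1/q))) * M^(1/q) := by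
        apply mul_le_mul_left
        apply ENNReal.ofReal_le_ofReal
        rw [hE2def]
        exact const_calc d hq hA0 (by positivity) hc1X


end Stmt7Aux

/-- Sublemma 4.2, first part.  Let `β` be Schwartz with `F β` supported in the ball of
radius `1/4` and `β(0) = 0`, and let `B_k` be convolution with `2^{kd} (Fβ)(2^k·)`
(so that `(B_k f)^ = β(2^{-k}·) f^`).  Then for `1 ≤ q < ∞`, `s ≥ 0`, all
`f ∈ L^q_loc` and a.e. `x`,
`|E_{k+1} B_{k+s} f(x)| + |E_k B_{k+s} f(x)| ≤ C 2^{-s/q'} (M(|f|^q)(x))^{1/q}`. -/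
theorem stmt_7 {d : ℕ} (β : SchwartzMap (Vd d) ℂ)
    (hsupp : Function.support (FT (β : Vd d → ℂ)) ⊆ closedBall 0 (1/4))
    (hβ0 : β 0 = 0) (q : ℝ) (hq : 1 ≤ q) :
    ∃ C : ℝ, 0 < C ∧
      ∀ (s : ℕ) (k : ℤ) (f : Vd d → ℂ), Measurable f →
        LocallyIntegrable (fun y => ‖f y‖ ^ q) volume →
        ∀ᵐ x : Vd d,
          (‖Ek (k + 1) (scaledConv (FT (β : Vd d → ℂ)) (k + s) f) x‖₊ : ℝ≥0∞) +
              (‖Ek k (scaledConv (FT (β : Vd d → ℂ)) (k + s) f) x‖₊ : ℝ≥0∞) ≤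
            ENNReal.ofReal (C * (2:ℝ) ^ (-(s : ℝ) * (1 - 1/q))) *
              (HLMax (fun y => (‖f y‖₊ : ℝ≥0∞) ^ q) x) ^ (1/q) := by
  classical
  set K := FT (β : Vd d → ℂ) with hK
  set A : ℝ := (SchwartzMap.seminorm ℝ 0 0) (SchwartzMap.fourierTransformCLM ℂ β) with hAdef
  have hA0 : 0 ≤ A := apply_nonneg _ _
  have hA : ∀ v, ‖K v‖ ≤ A := Stmt7Aux.K_bound β
  have hKc : Continuous K := Stmt7Aux.K_cont β
  have hK0 : ∫ v, K v = 0 := Stmt7Aux.K_int_zero β hβ0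
  set B : ℝ := (A+1) * CvolC d * ClayC d with hBdef
  have hB0 : 0 ≤ B := by
    have h1 : (1:ℝ) ≤ CvolC d := Stmt7Aux.CvolC_pos
    have h2 : (1:ℝ) ≤ ClayC d := Stmt7Aux.ClayC_pos
    positivity
  refine ⟨2*B + 1, by positivity, ?_⟩
  intro s k f hf hfq
  refine Filter.Eventually.of_forall fun x => ?_
  have h1 := Stmt7Aux.key K hKc hsupp hK0 A hA0 hA q hq f hf hfq k (k+1) s le_rfl x
  have h2 := Stmt7Aux.key K hKc hsupp hK0 A hA0 hA q hq f hf hfq k k s (by omega) x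
  set M := (HLMax (fun y => (‖f y‖₊ : ℝ≥0∞) ^ q) x) ^ (1/q)
  calc (‖Ek (k + 1) (scaledConv K (k + s) f) x‖₊ : ℝ≥0∞)
        + (‖Ek k (scaledConv K (k + s) f) x‖₊ : ℝ≥0∞)
      ≤ ENNReal.ofReal (B * (2:ℝ) ^ (-(s:ℝ) * (1 - 1/q))) * M
        + ENNReal.ofReal (B * (2:ℝ) ^ (-(s:ℝ) * (1 - 1/q))) * M := add_le_add h1 h2
    _ = ENNReal.ofReal (B * (2:ℝ) ^ (-(s:ℝ) * (1 - 1/q))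
          + B * (2:ℝ) ^ (-(s:ℝ) * (1 - 1/q))) * M := by
        rw [ENNReal.ofReal_add (by positivity) (by positivity), add_mul]
    _ ≤ ENNReal.ofReal ((2*B+1) * (2:ℝ) ^ (-(s:ℝ) * (1 - 1/q))) * M := by
        refine mul_le_mul_left (ENNReal.ofReal_le_ofReal ?_) M
        have : (0:ℝ) < (2:ℝ) ^ (-(s:ℝ) * (1 - 1/q)) := Real.rpow_pos_of_pos two_pos _
        nlinarith
end
end

section
/- Let $\beta$ be a Schwartz function on $\mathbb{R}^d$ with $\widehat\beta$ supported in $\{|x| \le 1/4\}$, and let $B_k$ be defined by $\widehat{B_k f}(\xi) = \beta(2^{-k}\xi)\widehat f(\xi)$. Then for $s \ge 0$ and $k \ge 0$, $|\mathbb{D}_k B_{k-s} f(x)| \le C 2^{-s} M f(x)$ for a.e. $x$, where $\mathbb{D}_k = \mathbb{E}_{k+1} - \mathbb{E}_k$ is the dyadic martingale difference and $M$ is the Hardy–Littlewood maximal function. -/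
open MeasureTheory Metric ENNReal RealInnerProductSpace FourierTransform

set_option maxHeartbeats 1000000

noncomputable section

lemma dyadCube_eq_preimage {d : ℕ} (k : ℤ) (x : Vd d) :
    dyadCube k x = (MeasurableEquiv.toLp 2 (Fin d → ℝ)).symm ⁻¹'
      (Set.univ.pi fun i => Set.Ico ((⌊(2:ℝ)^k * x i⌋ : ℝ) / 2^k) ((⌊(2:ℝ)^k * x i⌋ + 1 : ℝ) / 2^k)) := by
  have h2 : (0:ℝ) < 2 ^ k := zpow_pos two_pos k
  ext y
  simp only [dyadCube, Set.mem_setOf_eq, Set.mem_preimage, Set.mem_pi, Set.mem_univ,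
    Set.mem_Ico, forall_true_left, MeasurableEquiv.coe_toLp_symm]
  refine forall_congr' fun i => ?_
  rw [Int.floor_eq_iff]
  constructor
  · rintro ⟨h1, h2'⟩
    constructor
    · rw [div_le_iff₀ h2]; linarith [h1]
    · rw [lt_div_iff₀ h2]; push_cast; linarith [h2']
  · rintro ⟨h1, h2'⟩
    rw [div_le_iff₀ h2] at h1
    rw [lt_div_iff₀ h2] at h2'
    constructor
    · linarith
    · push_cast; linarith

lemma measurableSet_dyadCube {d : ℕ} (k : ℤ) (x : Vd d) : MeasurableSet (dyadCube k x) := by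
  rw [dyadCube_eq_preimage]
  exact (MeasurableEquiv.toLp 2 (Fin d → ℝ)).symm.measurable
    (MeasurableSet.univ_pi fun i => measurableSet_Ico)

lemma volume_dyadCube {d : ℕ} (k : ℤ) (x : Vd d) :
    volume (dyadCube k x) = ENNReal.ofReal ((2:ℝ) ^ (-(k * (d:ℤ)))) := by
  have h2 : (0:ℝ) < 2 ^ k := zpow_pos two_pos k
  rw [dyadCube_eq_preimage,
    (EuclideanSpace.volume_preserving_symm_measurableEquiv_toLp (Fin d)).measure_preimage
      (MeasurableSet.univ_pi fun i => measurableSet_Ico).nullMeasurableSet,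
    volume_pi_pi]
  have : ∀ i : Fin d, volume (Set.Ico ((⌊(2:ℝ)^k * x i⌋ : ℝ) / 2^k) ((⌊(2:ℝ)^k * x i⌋ + 1 : ℝ) / 2^k))
      = ENNReal.ofReal ((2:ℝ)^(-k)) := by
    intro i
    rw [Real.volume_Ico]
    congr 1
    rw [zpow_neg]
    field_simp
    ring
  simp only [this, Finset.prod_const, Finset.card_univ, Fintype.card_fin]
  rw [← ENNReal.ofReal_pow (by positivity), ← zpow_natCast ((2:ℝ)^(-k)), ← zpow_mul]
  ring_nf

lemma norm_sub_le_of_mem_dyadCube {d : ℕ} {k : ℤ} {x y : Vd d} (hy : y ∈ dyadCube k x) :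
    ‖y - x‖ ≤ Real.sqrt d * (2:ℝ) ^ (-k) := by
  have h2 : (0:ℝ) < 2 ^ k := zpow_pos two_pos k
  have hcoord : ∀ i, |y i - x i| ≤ (2:ℝ)^(-k) := by
    intro i
    have h1 : |(2:ℝ)^k * y i - 2^k * x i| < 1 := Int.abs_sub_lt_one_of_floor_eq_floor (hy i)
    have h4 : (2:ℝ)^k * |y i - x i| < 1 := by
      rw [← abs_of_pos h2, ← abs_mul]
      rwa [mul_sub]
    rw [zpow_neg, ← one_div, le_div_iff₀ h2]
    linarith
  have hsum : ∑ i, ‖(y - x) i‖^2 ≤ (d : ℝ) * ((2:ℝ)^(-k))^2 := by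
    have := Finset.sum_le_card_nsmul Finset.univ (fun i => ‖(y - x) i‖^2) (((2:ℝ)^(-k))^2)
      (fun i _ => by
        simp only [PiLp.sub_apply, Real.norm_eq_abs]
        have := hcoord i
        have h0 : (0:ℝ) ≤ |y i - x i| := abs_nonneg _
        nlinarith)
    simpa [Finset.card_univ, nsmul_eq_mul] using this
  calc ‖y - x‖ = Real.sqrt (∑ i, ‖(y - x) i‖^2) := EuclideanSpace.norm_eq _
    _ ≤ Real.sqrt ((d : ℝ) * ((2:ℝ)^(-k))^2) := Real.sqrt_le_sqrt hsum
    _ = Real.sqrt d * (2:ℝ)^(-k) := by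
        rw [Real.sqrt_mul (Nat.cast_nonneg d), Real.sqrt_sq (by positivity)]

lemma mem_dyadCube_self {d : ℕ} (k : ℤ) (x : Vd d) : x ∈ dyadCube k x := fun _ => rfl


lemma setLIntegral_le_HLMax {d : ℕ} (g : Vd d → ℝ≥0∞) (x : Vd d) {r : ℝ} (hr : 0 < r) :
    ∫⁻ y in ball x r, g y ≤ volume (ball x r) * HLMax g x := by
  have h0 : volume (ball x r) ≠ 0 := (measure_ball_pos volume x hr).ne'
  have ht : volume (ball x r) ≠ ⊤ := measure_ball_lt_top.ne
  have h1 : (volume (ball x r))⁻¹ * ∫⁻ y in ball x r, g y ≤ HLMax g x :=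
    le_iSup₂ (f := fun (r : ℝ) (_ : 0 < r) => (volume (ball x r))⁻¹ * ∫⁻ y in ball x r, g y) r hr
  calc ∫⁻ y in ball x r, g y
      = volume (ball x r) * ((volume (ball x r))⁻¹ * ∫⁻ y in ball x r, g y) := by
        rw [← mul_assoc, ENNReal.mul_inv_cancel h0 ht, one_mul]
    _ ≤ volume (ball x r) * HLMax g x := mul_le_mul_right h1 _

/-- The scaled weighted integral is dominated by the maximal function. -/
lemma weight_lintegral_le_HLMax {d : ℕ} (hd : 0 < d) (F : Vd d → ℝ≥0∞) (x : Vd d) {c : ℝ} (hc : 0 < c) :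
    ∫⁻ w, ENNReal.ofReal (c ^ d * ((1 + c * dist x w) ^ (d + 1))⁻¹) * F w ≤
      ENNReal.ofReal ((1 + 2 ^ (d + 1)) * (volume (ball (0 : Vd d) 1)).toReal) * HLMax F x := by
  set V1 : ℝ≥0∞ := volume (ball (0 : Vd d) 1) with hV1
  have hV1top : V1 ≠ ⊤ := measure_ball_lt_top.ne
  set M := HLMax F x with hM
  -- annuli
  set S : ℕ → Set (Vd d) := fun j => Nat.rec (ball x (1 / c))
    (fun j _ => ball x (2 ^ (j + 1) / c) \ ball x (2 ^ j / c)) j with hS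
  have hS0 : S 0 = ball x (1 / c) := rfl
  have hSsucc : ∀ j, S (j + 1) = ball x (2 ^ (j + 1) / c) \ ball x (2 ^ j / c) := fun j => rfl
  have hcover : Set.univ ⊆ ⋃ j, S j := by
    intro w _
    rcases lt_or_ge (dist x w) (1 / c) with h | h
    · exact Set.mem_iUnion.2 ⟨0, by simpa [hS0, dist_comm] using h⟩
    · have ht1 : (1:ℝ) ≤ c * dist x w := by
        rw [div_le_iff₀ hc] at h; linarith [h]
      obtain ⟨n, hn⟩ := pow_unbounded_of_one_lt (c * dist x w) (one_lt_two (α := ℝ))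
      have hex : ∃ n : ℕ, c * dist x w < 2 ^ n := ⟨n, hn⟩
      set n0 := Nat.find hex with hn0
      have hlt : c * dist x w < 2 ^ n0 := Nat.find_spec hex
      have hn0pos : n0 ≠ 0 := by
        intro h0
        rw [h0] at hlt; simp at hlt; linarith
      obtain ⟨j, hj⟩ := Nat.exists_eq_succ_of_ne_zero hn0pos
      have hge : (2:ℝ) ^ j ≤ c * dist x w := by
        by_contra hcon
        push_neg at hcon
        exact Nat.find_min hex (by omega : j < n0) hcon
      refine Set.mem_iUnion.2 ⟨j + 1, ?_⟩
      rw [hSsucc]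
      constructor
      · rw [mem_ball, dist_comm, lt_div_iff₀ hc, mul_comm]
        rw [hj] at hlt
        exact hlt
      · rw [mem_ball, not_lt, dist_comm, div_le_iff₀ hc, mul_comm]
        exact hge
  have hballM : ∀ r : ℝ, 0 < r → ∫⁻ w in ball x r, F w ≤ ENNReal.ofReal (r ^ d) * V1 * M := by
    intro r hr
    haveI : Nonempty (Fin d) := ⟨⟨0, hd⟩⟩
    haveI : Nontrivial (Vd d) := inferInstance
    have h := setLIntegral_le_HLMax F x hr
    rw [Measure.addHaar_ball volume x hr.le] at h
    simpa [finrank_euclideanSpace_fin, mul_assoc] using h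
  have hSmeas : ∀ j, MeasurableSet (S j) := by
    intro j
    cases j with
    | zero => exact measurableSet_ball
    | succ j => exact measurableSet_ball.diff measurableSet_ball
  -- bound on each piece
  have hterm0 : ∫⁻ w in S 0, ENNReal.ofReal (c ^ d * ((1 + c * dist x w) ^ (d + 1))⁻¹) * F w
      ≤ V1 * M := by
    calc ∫⁻ w in S 0, ENNReal.ofReal (c ^ d * ((1 + c * dist x w) ^ (d + 1))⁻¹) * F w
        ≤ ∫⁻ w in S 0, ENNReal.ofReal (c ^ d) * F w := by
          refine setLIntegral_mono' (hSmeas 0) fun w _ => ?_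
          refine mul_le_mul_left (ENNReal.ofReal_le_ofReal ?_) _
          have h1 : (0:ℝ) ≤ c * dist x w := by positivity
          have h2' : (1:ℝ) ≤ (1 + c * dist x w) ^ (d + 1) := one_le_pow₀ (by linarith)
          calc c ^ d * ((1 + c * dist x w) ^ (d + 1))⁻¹ ≤ c ^ d * 1 := by
                refine mul_le_mul_of_nonneg_left ?_ (by positivity)
                exact inv_le_one_of_one_le₀ h2'
            _ = c ^ d := mul_one _
      _ = ENNReal.ofReal (c ^ d) * ∫⁻ w in S 0, F w :=
          lintegral_const_mul' _ _ ENNReal.ofReal_ne_top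
      _ ≤ ENNReal.ofReal (c ^ d) * (ENNReal.ofReal ((1/c) ^ d) * V1 * M) := by
          refine mul_le_mul_right ?_ _
          rw [hS0]
          exact hballM _ (by positivity)
      _ = ENNReal.ofReal (c ^ d) * ENNReal.ofReal ((1/c) ^ d) * (V1 * M) := by ring
      _ = V1 * M := by
          have hcc : c ^ d * (1/c) ^ d = 1 := by
            rw [one_div, inv_pow, mul_inv_cancel₀ (by positivity)]
          rw [← ENNReal.ofReal_mul (by positivity), hcc, ENNReal.ofReal_one, one_mul]
  have htermsucc : ∀ j : ℕ, ∫⁻ w in S (j+1),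
        ENNReal.ofReal (c ^ d * ((1 + c * dist x w) ^ (d + 1))⁻¹) * F w
      ≤ ENNReal.ofReal (2 ^ d * (2⁻¹) ^ j) * (V1 * M) := by
    intro j
    have hwj : ∀ w ∈ S (j+1),
        c ^ d * ((1 + c * dist x w) ^ (d + 1))⁻¹ ≤ c ^ d * ((2:ℝ) ^ (j * (d + 1)))⁻¹ := by
      intro w hw
      rw [hSsucc] at hw
      have h2j : (2:ℝ) ^ j ≤ c * dist x w := by
        have := hw.2
        rw [mem_ball, not_lt, dist_comm, div_le_iff₀ hc, mul_comm] at this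
        exact this
      refine mul_le_mul_of_nonneg_left ?_ (by positivity)
      rw [inv_le_inv₀ (by positivity) (by positivity)]
      calc (2:ℝ) ^ (j * (d+1)) = ((2:ℝ) ^ j) ^ (d + 1) := by rw [pow_mul]
        _ ≤ (1 + c * dist x w) ^ (d + 1) := by
            refine pow_le_pow_left₀ (by positivity) ?_ _
            linarith
    calc ∫⁻ w in S (j+1), ENNReal.ofReal (c ^ d * ((1 + c * dist x w) ^ (d + 1))⁻¹) * F w
        ≤ ∫⁻ w in S (j+1), ENNReal.ofReal (c ^ d * ((2:ℝ) ^ (j * (d + 1)))⁻¹) * F w := by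
          refine setLIntegral_mono' (hSmeas (j+1)) fun w hw => ?_
          exact mul_le_mul_left (ENNReal.ofReal_le_ofReal (hwj w hw)) _
      _ = ENNReal.ofReal (c ^ d * ((2:ℝ) ^ (j * (d + 1)))⁻¹) * ∫⁻ w in S (j+1), F w :=
          lintegral_const_mul' _ _ ENNReal.ofReal_ne_top
      _ ≤ ENNReal.ofReal (c ^ d * ((2:ℝ) ^ (j * (d + 1)))⁻¹) *
            (ENNReal.ofReal ((2 ^ (j+1) / c) ^ d) * V1 * M) := by
          refine mul_le_mul_right ?_ _
          refine le_trans (lintegral_mono_set ?_) (hballM (2 ^ (j+1) / c) (by positivity))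
          rw [hSsucc]
          exact Set.diff_subset
      _ = ENNReal.ofReal (c ^ d * ((2:ℝ) ^ (j * (d + 1)))⁻¹) * ENNReal.ofReal ((2 ^ (j+1) / c) ^ d) * (V1 * M) := by ring
      _ = ENNReal.ofReal (c ^ d * ((2:ℝ) ^ (j * (d + 1)))⁻¹ * (2 ^ (j+1) / c) ^ d) * (V1 * M) := by
          rw [← ENNReal.ofReal_mul (by positivity)]
      _ ≤ ENNReal.ofReal (2 ^ d * (2⁻¹) ^ j) * (V1 * M) := by
          refine mul_le_mul_left (le_of_eq (congrArg _ ?_)) _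
          rw [div_pow, ← pow_mul]
          field_simp
          have h2 : (2:ℝ)^((j+1)*d) * 2^j = 2^d * 2^(j*(d+1)) := by
            rw [← pow_add, ← pow_add]
            congr 1
            ring
          have hhalf : ((1:ℝ)/2)^j * 2^j = 1 := by rw [← mul_pow]; norm_num
          linear_combination c ^ d * h2 - 2^(j*d)*2^d * hhalf
  -- assemble
  calc ∫⁻ w, ENNReal.ofReal (c ^ d * ((1 + c * dist x w) ^ (d + 1))⁻¹) * F w
      = ∫⁻ w in Set.univ, ENNReal.ofReal (c ^ d * ((1 + c * dist x w) ^ (d + 1))⁻¹) * F w :=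
        (setLIntegral_univ _).symm
    _ ≤ ∫⁻ w in ⋃ j, S j, ENNReal.ofReal (c ^ d * ((1 + c * dist x w) ^ (d + 1))⁻¹) * F w :=
        lintegral_mono_set hcover
    _ ≤ ∑' j, ∫⁻ w in S j, ENNReal.ofReal (c ^ d * ((1 + c * dist x w) ^ (d + 1))⁻¹) * F w :=
        lintegral_iUnion_le _ _
    _ ≤ ∑' j : ℕ, (fun j => Nat.rec (V1 * M) (fun j _ => ENNReal.ofReal (2 ^ d * (2⁻¹) ^ j) * (V1 * M)) j) j := by
        refine ENNReal.tsum_le_tsum fun j => ?_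
        cases j with
        | zero => exact hterm0
        | succ j => exact htermsucc j
    _ = V1 * M + ∑' j : ℕ, ENNReal.ofReal (2 ^ d * (2⁻¹) ^ j) * (V1 * M) := by
        rw [tsum_eq_zero_add' ENNReal.summable]
        rfl
    _ = (1 + ENNReal.ofReal (2 ^ d) * 2) * (V1 * M) := by
        have : ∑' j : ℕ, ENNReal.ofReal (2 ^ d * (2⁻¹) ^ j) * (V1 * M)
            = (ENNReal.ofReal (2 ^ d) * 2) * (V1 * M) := by
          rw [ENNReal.tsum_mul_right]
          congr 1
          have h1 : ∀ j : ℕ, ENNReal.ofReal ((2:ℝ) ^ d * (2⁻¹) ^ j)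
              = ENNReal.ofReal ((2:ℝ) ^ d) * (2⁻¹ : ℝ≥0∞) ^ j := by
            intro j
            rw [ENNReal.ofReal_mul (by positivity)]
            congr 1
            rw [ENNReal.ofReal_pow (by norm_num), ENNReal.ofReal_inv_of_pos (by norm_num),
              ENNReal.ofReal_ofNat]
          simp_rw [h1]
          rw [ENNReal.tsum_mul_left, ENNReal.tsum_geometric, ENNReal.one_sub_inv_two, inv_inv]
        rw [this, add_mul, one_mul]
    _ = ENNReal.ofReal ((1 + 2 ^ (d + 1)) * (volume (ball (0 : Vd d) 1)).toReal) * M := by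
        rw [ENNReal.ofReal_mul (by positivity), ENNReal.ofReal_toReal hV1top]
        have : ENNReal.ofReal ((1:ℝ) + 2 ^ (d+1)) = 1 + (2:ℝ≥0∞) ^ d * 2 := by
          rw [ENNReal.ofReal_add (by norm_num) (by positivity), ENNReal.ofReal_one,
            ENNReal.ofReal_pow (by norm_num), ENNReal.ofReal_ofNat, pow_succ]
        rw [this, ENNReal.ofReal_pow (by norm_num : (0:ℝ) ≤ 2), ENNReal.ofReal_ofNat]
        ring


lemma one_add_pow_le {t : ℝ} (ht : 0 ≤ t) (m : ℕ) : (1 + t) ^ m ≤ 2 ^ m * (1 + t ^ m) := by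
  have h1 : 1 + t ≤ 2 * max 1 t := by
    rcases le_total t 1 with h | h
    · rw [max_eq_left h]; linarith
    · rw [max_eq_right h]; linarith
  calc (1 + t) ^ m ≤ (2 * max 1 t) ^ m := pow_le_pow_left₀ (by linarith) h1 m
    _ = 2 ^ m * (max 1 t) ^ m := mul_pow _ _ m
    _ ≤ 2 ^ m * (1 + t ^ m) := by
        refine mul_le_mul_of_nonneg_left ?_ (by positivity)
        rcases le_total t 1 with h | h
        · rw [max_eq_left h, one_pow]
          have : (0:ℝ) ≤ t ^ m := by positivity
          linarith
        · rw [max_eq_right h]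
          have : (1:ℝ) ≤ t := h
          nlinarith [pow_le_pow_left₀ ht (le_refl t) m]

lemma schwartz_iteratedFDeriv_decay {d : ℕ} (K : SchwartzMap (Vd d) ℂ) (n : ℕ) :
    ∃ D : ℝ, 0 < D ∧ ∀ a : Vd d,
      ‖iteratedFDeriv ℝ n (⇑K) a‖ ≤ D * ((1 + ‖a‖) ^ (d + 1))⁻¹ := by
  obtain ⟨C0, hC0pos, hC0⟩ := K.decay 0 n
  obtain ⟨C1, hC1pos, hC1⟩ := K.decay (d + 1) n
  refine ⟨2 ^ (d+1) * (C0 + C1) + 1, by positivity, fun a => ?_⟩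
  have hpos : (0:ℝ) < (1 + ‖a‖) ^ (d + 1) := by positivity
  have key : (1 + ‖a‖) ^ (d+1) * ‖iteratedFDeriv ℝ n (⇑K) a‖ ≤ 2^(d+1) * (C0 + C1) := by
    have h0 : ‖iteratedFDeriv ℝ n (⇑K) a‖ ≤ C0 := by simpa using hC0 a
    have h1 := hC1 a
    have hn : (0:ℝ) ≤ ‖iteratedFDeriv ℝ n (⇑K) a‖ := norm_nonneg _
    calc (1+‖a‖)^(d+1) * ‖iteratedFDeriv ℝ n (⇑K) a‖
        ≤ 2^(d+1) * (1 + ‖a‖^(d+1)) * ‖iteratedFDeriv ℝ n (⇑K) a‖ :=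
          mul_le_mul_of_nonneg_right (one_add_pow_le (norm_nonneg a) _) hn
      _ = 2^(d+1) * (‖iteratedFDeriv ℝ n (⇑K) a‖ + ‖a‖^(d+1) * ‖iteratedFDeriv ℝ n (⇑K) a‖) := by
          ring
      _ ≤ 2^(d+1) * (C0 + C1) :=
          mul_le_mul_of_nonneg_left (add_le_add h0 h1) (by positivity)
  have h2 : ‖iteratedFDeriv ℝ n (⇑K) a‖ ≤ 2^(d+1) * (C0 + C1) * ((1 + ‖a‖) ^ (d+1))⁻¹ := by
    rw [mul_comm] at key
    rw [← div_eq_mul_inv, le_div_iff₀ hpos]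
    exact key
  refine h2.trans ?_
  have : (0:ℝ) ≤ ((1 + ‖a‖) ^ (d+1))⁻¹ := by positivity
  nlinarith

lemma aux_inv_pow {m : ℕ} {t u v : ℝ} (ht : 1 ≤ t) (hu : 0 ≤ u) (hv : 0 ≤ v)
    (h : 1 + v ≤ t * (1 + u)) : ((1 + u) ^ m)⁻¹ ≤ t ^ m * ((1 + v) ^ m)⁻¹ := by
  have h1 : (0:ℝ) < (1 + u) ^ m := by positivity
  have h2 : (0:ℝ) < (1 + v) ^ m := by positivity
  rw [← div_eq_mul_inv, le_div_iff₀ h2, inv_mul_eq_div, div_le_iff₀ h1, ← mul_pow]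
  exact pow_le_pow_left₀ (by linarith) h m

lemma schwartz_norm_decay {d : ℕ} (K : SchwartzMap (Vd d) ℂ) :
    ∃ D : ℝ, 0 < D ∧ ∀ a : Vd d, ‖K a‖ ≤ D * ((1 + ‖a‖) ^ (d + 1))⁻¹ := by
  obtain ⟨D, hD, h⟩ := schwartz_iteratedFDeriv_decay K 0
  exact ⟨D, hD, fun a => by simpa [norm_iteratedFDeriv_zero] using h a⟩

lemma schwartz_lipschitz_decay {d : ℕ} (K : SchwartzMap (Vd d) ℂ) (R : ℝ) (hR : 0 ≤ R) :
    ∃ C : ℝ, 0 < C ∧ ∀ a b : Vd d, ‖b - a‖ ≤ R →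
      ‖K b - K a‖ ≤ C * ‖b - a‖ * ((1 + ‖a‖) ^ (d + 1))⁻¹ := by
  obtain ⟨D, hD, h⟩ := schwartz_iteratedFDeriv_decay K 1
  have hfd : ∀ t : Vd d, ‖fderiv ℝ (⇑K) t‖ ≤ D * ((1 + ‖t‖) ^ (d + 1))⁻¹ := by
    intro t
    have h2 := h t
    have e : ‖iteratedFDeriv ℝ 1 (⇑K) t‖ = ‖fderiv ℝ (⇑K) t‖ := by
      rw [← norm_iteratedFDeriv_fderiv, norm_iteratedFDeriv_zero]
    rwa [e] at h2
  refine ⟨D * (1 + R) ^ (d + 1), by positivity, fun a b hab => ?_⟩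
  have hconv : Convex ℝ (closedBall a R) := convex_closedBall a R
  have hbound : ∀ t ∈ closedBall a R,
      ‖fderiv ℝ (⇑K) t‖ ≤ D * (1 + R) ^ (d + 1) * ((1 + ‖a‖) ^ (d + 1))⁻¹ := by
    intro t ht
    rw [mem_closedBall, dist_eq_norm] at ht
    have h1 : 1 + ‖a‖ ≤ (1 + R) * (1 + ‖t‖) := by
      have : ‖a‖ ≤ ‖t‖ + R := by
        have := norm_sub_norm_le t a
        calc ‖a‖ = ‖t‖ - (‖t‖ - ‖a‖) := by ring
          _ ≤ ‖t‖ + ‖t - a‖ := by nlinarith [abs_le.1 (abs_norm_sub_norm_le t a)]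
          _ ≤ ‖t‖ + R := by linarith
      nlinarith [norm_nonneg t]
    calc ‖fderiv ℝ (⇑K) t‖ ≤ D * ((1 + ‖t‖) ^ (d + 1))⁻¹ := hfd t
      _ ≤ D * ((1 + R) ^ (d+1) * ((1 + ‖a‖) ^ (d + 1))⁻¹) :=
          mul_le_mul_of_nonneg_left
            (aux_inv_pow (by linarith) (norm_nonneg t) (norm_nonneg a) h1) hD.le
      _ = D * (1 + R) ^ (d + 1) * ((1 + ‖a‖) ^ (d + 1))⁻¹ := by ring
  have hdiff : DifferentiableOn ℝ (⇑K) (closedBall a R) :=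
    (K.differentiable).differentiableOn
  have := hconv.norm_image_sub_le_of_norm_fderiv_le
    (fun t _ => K.differentiable t) hbound
    (mem_closedBall_self hR) (by rw [mem_closedBall, dist_eq_norm]; exact hab)
  calc ‖K b - K a‖ ≤ D * (1 + R) ^ (d + 1) * ((1 + ‖a‖) ^ (d + 1))⁻¹ * ‖b - a‖ := this
    _ = D * (1 + R) ^ (d + 1) * ‖b - a‖ * ((1 + ‖a‖) ^ (d + 1))⁻¹ := by ring


lemma FT_eq_fourier {d : ℕ} (β : SchwartzMap (Vd d) ℂ) :
    FT (β : Vd d → ℂ) = (SchwartzMap.fourierTransformCLM ℝ β : Vd d → ℂ) := by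
  funext ξ
  rw [SchwartzMap.fourierTransformCLM_apply, SchwartzMap.fourier_coe, Real.fourier_eq']
  unfold FT
  congr 1
  funext x
  rw [smul_eq_mul]
  congr 2
  push_cast
  ring

lemma stronglyMeasurable_scaledConv {d : ℕ} (K : Vd d → ℂ) (hK : Continuous K) (k' : ℤ)
    (f : Vd d → ℂ) (hf : Measurable f) : StronglyMeasurable (scaledConv K k' f) := by
  have hm : StronglyMeasurable (Function.uncurry fun x y : Vd d =>
      ((2:ℝ) ^ (k' * (d : ℤ))) • K ((2:ℝ) ^ k' • (x - y)) * f y) := by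
    apply Measurable.stronglyMeasurable
    have h1 : Continuous fun p : Vd d × Vd d => K ((2:ℝ) ^ k' • (p.1 - p.2)) :=
      hK.comp (by fun_prop)
    exact (h1.measurable.const_smul ((2:ℝ) ^ (k' * (d : ℤ)))).mul (hf.comp measurable_snd)
  exact hm.integral_prod_right'


lemma core {d : ℕ} (hd : 0 < d) (K : SchwartzMap (Vd d) ℂ) :
    ∃ C : ℝ, 0 < C ∧ ∀ (s k : ℕ) (f : Vd d → ℂ), Measurable f → ∀ x : Vd d,
      (‖Ek ((k : ℤ) + 1) (scaledConv (⇑K) ((k : ℤ) - s) f) x -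
          Ek (k : ℤ) (scaledConv (⇑K) ((k : ℤ) - s) f) x‖₊ : ℝ≥0∞) ≤
        ENNReal.ofReal (C * (2:ℝ) ^ (-(s : ℤ))) * HLMax (fun y => (‖f y‖₊ : ℝ≥0∞)) x := by
  obtain ⟨C0, hC0, hKdec⟩ := schwartz_norm_decay K
  obtain ⟨C1, hC1, hKlip⟩ := schwartz_lipschitz_decay K (Real.sqrt d + 1) (by positivity)
  set sd := Real.sqrt d with hsd
  have hsd0 : 0 ≤ sd := Real.sqrt_nonneg d
  set Ar : ℝ := (1 + 2 ^ (d + 1)) * (volume (ball (0 : Vd d) 1)).toReal with hAr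
  have hAr0 : 0 ≤ Ar := by
    rw [hAr]; positivity
  refine ⟨2 * C1 * (sd + 1) * Ar + 1, by positivity, fun s k f hf x => ?_⟩
  set F : Vd d → ℝ≥0∞ := fun y => (‖f y‖₊ : ℝ≥0∞) with hF
  set M := HLMax F x with hM
  set σ : ℝ := (2:ℝ) ^ (-(s:ℤ)) with hσ
  have hσpos : 0 < σ := zpow_pos two_pos _
  have hσle : σ ≤ 1 := by
    rw [hσ, zpow_neg, zpow_natCast]
    exact inv_le_one_of_one_le₀ (one_le_pow₀ one_le_two)
  have hCpos : (0:ℝ) < (2 * C1 * (sd + 1) * Ar + 1) * σ := by positivity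
  by_cases hMtop : M = ⊤
  · rw [hMtop, ENNReal.mul_top (ne_of_gt (ENNReal.ofReal_pos.2 hCpos))]
    exact le_top
  -- main case
  set c : ℝ := (2:ℝ) ^ ((k:ℤ) - s) with hc
  have hcpos : 0 < c := zpow_pos two_pos _
  have hck : c * (2:ℝ) ^ (-(k:ℤ)) = σ := by
    rw [hc, hσ, ← zpow_add₀ (two_ne_zero)]
    congr 1
    ring
  set g := scaledConv (⇑K) ((k:ℤ) - s) f with hg
  have hcd : ((2:ℝ) ^ (((k:ℤ) - s) * (d:ℤ))) = c ^ d := by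
    rw [hc, ← zpow_natCast ((2:ℝ) ^ ((k:ℤ) - s)) d, ← zpow_mul]
  have hgdef : ∀ y, g y = ∫ w, (c ^ d : ℝ) • K (c • (y - w)) * f w := by
    intro y
    rw [hg]
    unfold scaledConv
    congr 1
    funext w
    rw [hcd, hc]
  set J := ∫⁻ w, ENNReal.ofReal (c ^ d * ((1 + c * dist x w) ^ (d + 1))⁻¹) * F w with hJ
  have hJle : J ≤ ENNReal.ofReal Ar * M := weight_lintegral_le_HLMax hd F x hcpos
  have hJtop : J ≠ ⊤ :=
    (lt_of_le_of_lt hJle (ENNReal.mul_lt_top ENNReal.ofReal_lt_top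
      (lt_top_iff_ne_top.2 hMtop))).ne
  set h : Vd d → ℝ := fun w => c ^ d * ((1 + c * dist x w) ^ (d + 1))⁻¹ * ‖f w‖ with hh
  have hh0 : ∀ w, 0 ≤ h w := fun w => by
    rw [hh]
    have : (0:ℝ) ≤ c * dist x w := by positivity
    positivity
  have hwcont : Continuous fun w : Vd d => c ^ d * ((1 + c * dist x w) ^ (d + 1))⁻¹ := by
    refine continuous_const.mul (Continuous.inv₀ ?_ fun w => by positivity)
    exact (continuous_const.add (continuous_const.mul (continuous_const.dist continuous_id))).pow _
  have hhmeas : Measurable h := (hwcont.measurable).mul hf.norm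
  have hofReal : ∀ w, ENNReal.ofReal (h w) =
      ENNReal.ofReal (c ^ d * ((1 + c * dist x w) ^ (d + 1))⁻¹) * F w := by
    intro w
    rw [hh]
    have hp : (0:ℝ) ≤ c * dist x w := by positivity
    rw [ENNReal.ofReal_mul (by positivity)]
    congr 1
    exact ofReal_norm_eq_enorm (f w)
  have hlint : ∫⁻ w, (‖h w‖₊ : ℝ≥0∞) = J := by
    rw [hJ]
    refine lintegral_congr fun w => ?_
    rw [← hofReal w]; exact Real.enorm_eq_ofReal (hh0 w)
  have hhint : Integrable h := by
    refine ⟨hhmeas.aestronglyMeasurable, ?_⟩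
    rw [HasFiniteIntegral]; change ∫⁻ w, (‖h w‖₊ : ℝ≥0∞) < ⊤; rw [hlint]
    exact lt_top_iff_ne_top.2 hJtop
  -- comparison of weights at shifted basepoints
  have hcomp : ∀ y : Vd d, c * ‖y - x‖ ≤ sd → ∀ w,
      ((1 + c * ‖y - w‖) ^ (d + 1))⁻¹ ≤ (1 + sd) ^ (d + 1) * ((1 + c * dist x w) ^ (d + 1))⁻¹ := by
    intro y hy w
    refine aux_inv_pow (by linarith) (by positivity) (by positivity) ?_
    have h1 : dist x w ≤ ‖x - y‖ + ‖y - w‖ := by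
      rw [dist_eq_norm]
      exact norm_sub_le_norm_sub_add_norm_sub x y w
    have h2 : ‖x - y‖ = ‖y - x‖ := norm_sub_rev x y
    have h3 : c * dist x w ≤ sd + c * ‖y - w‖ := by
      calc c * dist x w ≤ c * (‖x - y‖ + ‖y - w‖) := by
            exact mul_le_mul_of_nonneg_left h1 hcpos.le
        _ = c * ‖y - x‖ + c * ‖y - w‖ := by rw [h2]; ring
        _ ≤ sd + c * ‖y - w‖ := by linarith
    nlinarith [mul_nonneg hcpos.le (norm_nonneg (y - w))]
  -- integrability of convolution integrand
  have hyint : ∀ y : Vd d, c * ‖y - x‖ ≤ sd →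
      Integrable (fun w => (c ^ d : ℝ) • K (c • (y - w)) * f w) := by
    intro y hy
    have hbd : ∀ w, ‖(c ^ d : ℝ) • K (c • (y - w)) * f w‖ ≤
        C0 * (1 + sd) ^ (d + 1) * h w := by
      intro w
      rw [norm_mul, norm_smul, Real.norm_eq_abs, abs_of_nonneg (by positivity)]
      have hK1 : ‖K (c • (y - w))‖ ≤ C0 * ((1 + c * ‖y - w‖) ^ (d + 1))⁻¹ := by
        have := hKdec (c • (y - w))
        rwa [norm_smul, Real.norm_eq_abs, abs_of_nonneg hcpos.le] at this
      have hK2 : ‖K (c • (y - w))‖ ≤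
          C0 * ((1 + sd) ^ (d + 1) * ((1 + c * dist x w) ^ (d + 1))⁻¹) :=
        hK1.trans (mul_le_mul_of_nonneg_left (hcomp y hy w) hC0.le)
      rw [hh]
      have hfw : (0:ℝ) ≤ ‖f w‖ := norm_nonneg _
      have hcd0 : (0:ℝ) ≤ c ^ d := by positivity
      have hKnn : (0:ℝ) ≤ ‖K (c • (y - w))‖ := norm_nonneg _
      nlinarith [mul_le_mul_of_nonneg_right hK2 hfw, mul_le_mul_of_nonneg_left
        (mul_le_mul_of_nonneg_right hK2 hfw) hcd0]
    have hmeas : AEStronglyMeasurable (fun w => (c ^ d : ℝ) • K (c • (y - w)) * f w) volume := by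
      apply Measurable.aestronglyMeasurable
      have h1 : Continuous fun w : Vd d => K (c • (y - w)) :=
        K.continuous.comp (by fun_prop)
      exact (h1.measurable.const_smul (c ^ d : ℝ)).mul hf
    exact Integrable.mono' (hhint.const_mul _) hmeas (Filter.Eventually.of_forall hbd)
  -- oscillation estimate
  have hosc : ∀ y : Vd d, ‖y - x‖ ≤ sd * (2:ℝ) ^ (-(k:ℤ)) →
      ‖g y - g x‖ ≤ C1 * (sd * σ) * ∫ w, h w := by
    intro y hy
    have hcy : c * ‖y - x‖ ≤ sd * σ := by
      calc c * ‖y - x‖ ≤ c * (sd * (2:ℝ) ^ (-(k:ℤ))) := mul_le_mul_of_nonneg_left hy hcpos.le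
        _ = sd * (c * (2:ℝ) ^ (-(k:ℤ))) := by ring
        _ = sd * σ := by rw [hck]
    have hcy1 : c * ‖y - x‖ ≤ sd := hcy.trans (by nlinarith)
    have hxx : c * ‖x - x‖ ≤ sd := by simp [hsd0]
    have hyI := hyint y hcy1
    have hxI := hyint x hxx
    rw [hgdef y, hgdef x, ← integral_sub hyI hxI]
    have hptwise : ∀ w, ‖(c ^ d : ℝ) • K (c • (y - w)) * f w -
        (c ^ d : ℝ) • K (c • (x - w)) * f w‖ ≤ C1 * (sd * σ) * h w := by
      intro w
      rw [smul_mul_assoc, smul_mul_assoc, ← smul_sub, ← sub_mul, norm_smul, Real.norm_eq_abs,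
        abs_of_nonneg (by positivity : (0:ℝ) ≤ c ^ d), norm_mul]
      have hba : c • (y - w) - c • (x - w) = c • (y - x) := by
        rw [← smul_sub]
        congr 1
        abel
      have hnba : ‖c • (y - w) - c • (x - w)‖ = c * ‖y - x‖ := by
        rw [hba, norm_smul, Real.norm_eq_abs, abs_of_nonneg hcpos.le]
      have hlip := hKlip (c • (x - w)) (c • (y - w)) (by rw [hnba]; linarith)
      rw [hnba] at hlip
      have hax : ‖c • (x - w)‖ = c * dist x w := by
        rw [norm_smul, Real.norm_eq_abs, abs_of_nonneg hcpos.le, dist_eq_norm]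
      rw [hax] at hlip
      have hinv0 : (0:ℝ) ≤ ((1 + c * dist x w) ^ (d + 1))⁻¹ := by
        have : (0:ℝ) ≤ c * dist x w := by positivity
        positivity
      have hlip2 : ‖K (c • (y - w)) - K (c • (x - w))‖ ≤
          C1 * (sd * σ) * ((1 + c * dist x w) ^ (d + 1))⁻¹ := by
        refine hlip.trans ?_
        have := mul_le_mul_of_nonneg_right (mul_le_mul_of_nonneg_left hcy hC1.le) hinv0
        linarith
      rw [hh]
      have hfw : (0:ℝ) ≤ ‖f w‖ := norm_nonneg _
      have hcd0 : (0:ℝ) ≤ c ^ d := by positivity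
      nlinarith [mul_le_mul_of_nonneg_left (mul_le_mul_of_nonneg_right hlip2 hfw) hcd0,
        norm_nonneg (K (c • (y - w)) - K (c • (x - w)))]
    calc ‖∫ w, ((c ^ d : ℝ) • K (c • (y - w)) * f w - (c ^ d : ℝ) • K (c • (x - w)) * f w)‖
        ≤ ∫ w, C1 * (sd * σ) * h w :=
          norm_integral_le_of_norm_le (hhint.const_mul _) (Filter.Eventually.of_forall hptwise)
      _ = C1 * (sd * σ) * ∫ w, h w := integral_const_mul _ _
  set B := C1 * (sd * σ) * ∫ w, h w with hB
  have hB0 : 0 ≤ B := by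
    rw [hB]
    have : 0 ≤ ∫ w, h w := integral_nonneg hh0
    positivity
  have hgsm : StronglyMeasurable g := stronglyMeasurable_scaledConv _ K.continuous _ f hf
  -- conditional expectation bound
  have hEkbd : ∀ m : ℤ, (k:ℤ) ≤ m → ‖Ek m g x - g x‖ ≤ B := by
    intro m hm
    have hQmeas := measurableSet_dyadCube m x
    have hQvol := volume_dyadCube m x
    have hQfin : volume (dyadCube m x) < ⊤ := by rw [hQvol]; exact ENNReal.ofReal_lt_top
    have hQdist : ∀ w ∈ dyadCube m x, ‖w - x‖ ≤ sd * (2:ℝ) ^ (-(k:ℤ)) := by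
      intro w hw
      refine (norm_sub_le_of_mem_dyadCube hw).trans ?_
      refine mul_le_mul_of_nonneg_left ?_ hsd0
      exact zpow_le_zpow_right₀ one_le_two (by omega)
    have hgQbd : ∀ w ∈ dyadCube m x, ‖g w‖ ≤ ‖g x‖ + B := by
      intro w hw
      have h1 := hosc w (hQdist w hw)
      calc ‖g w‖ = ‖g x + (g w - g x)‖ := by rw [add_sub_cancel]
        _ ≤ ‖g x‖ + ‖g w - g x‖ := norm_add_le _ _
        _ ≤ ‖g x‖ + B := by linarith
    have hgint : IntegrableOn g (dyadCube m x) volume :=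
      Measure.integrableOn_of_bounded hQfin.ne hgsm.aestronglyMeasurable
        ((ae_restrict_iff' hQmeas).2 (Filter.Eventually.of_forall hgQbd))
    have hconst : IntegrableOn (fun _ => g x) (dyadCube m x) volume :=
      integrableOn_const hQfin.ne
    have hAv : ((2:ℝ) ^ (m * (d:ℤ))) * ((volume (dyadCube m x)).toReal) = 1 := by
      rw [hQvol, ENNReal.toReal_ofReal (by positivity), ← zpow_add₀ (two_ne_zero : (2:ℝ) ≠ 0)]
      rw [add_neg_cancel, zpow_zero]
    have hsplit : Ek m g x - g x =
        ((2:ℝ) ^ (m * (d:ℤ))) • ∫ w in dyadCube m x, (g w - g x) := by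
      rw [integral_sub hgint hconst, setIntegral_const, measureReal_def, smul_sub, smul_smul, hAv, one_smul]
      rfl
    rw [hsplit, norm_smul, Real.norm_eq_abs, abs_of_nonneg (by positivity)]
    have hbound := norm_setIntegral_le_of_norm_le_const (μ := volume) hQfin
      (fun w hw => by
        have := hosc w (hQdist w hw)
        simpa using this)
    calc ((2:ℝ) ^ (m * (d:ℤ))) * ‖∫ w in dyadCube m x, (g w - g x)‖
        ≤ ((2:ℝ) ^ (m * (d:ℤ))) * (B * (volume (dyadCube m x)).toReal) :=
          mul_le_mul_of_nonneg_left hbound (by positivity)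
      _ = B * (((2:ℝ) ^ (m * (d:ℤ))) * (volume (dyadCube m x)).toReal) := by ring
      _ = B := by rw [hAv, mul_one]
  have hfinal : ‖Ek ((k:ℤ) + 1) g x - Ek (k:ℤ) g x‖ ≤ 2 * B := by
    have h1 := hEkbd ((k:ℤ) + 1) (by omega)
    have h2 := hEkbd (k:ℤ) le_rfl
    calc ‖Ek ((k:ℤ) + 1) g x - Ek (k:ℤ) g x‖
        = ‖(Ek ((k:ℤ) + 1) g x - g x) - (Ek (k:ℤ) g x - g x)‖ := by
          rw [sub_sub_sub_cancel_right]
      _ ≤ ‖Ek ((k:ℤ) + 1) g x - g x‖ + ‖Ek (k:ℤ) g x - g x‖ := norm_sub_le _ _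
      _ ≤ 2 * B := by linarith
  -- conclude in ℝ≥0∞
  calc (‖Ek ((k:ℤ) + 1) g x - Ek (k:ℤ) g x‖₊ : ℝ≥0∞)
      = ENNReal.ofReal ‖Ek ((k:ℤ) + 1) g x - Ek (k:ℤ) g x‖ :=
        (ofReal_norm_eq_enorm _).symm
    _ ≤ ENNReal.ofReal (2 * B) := ENNReal.ofReal_le_ofReal hfinal
    _ = ENNReal.ofReal (2 * (C1 * (sd * σ))) * ENNReal.ofReal (∫ w, h w) := by
        rw [← ENNReal.ofReal_mul (by positivity), hB]
        congr 1
        ring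
    _ = ENNReal.ofReal (2 * (C1 * (sd * σ))) * J := by
        congr 1
        rw [ofReal_integral_eq_lintegral_ofReal hhint (Filter.Eventually.of_forall hh0), hJ]
        exact lintegral_congr fun w => hofReal w
    _ ≤ ENNReal.ofReal (2 * (C1 * (sd * σ))) * (ENNReal.ofReal Ar * M) :=
        mul_le_mul_right hJle _
    _ = ENNReal.ofReal (2 * (C1 * (sd * σ)) * Ar) * M := by
        rw [← mul_assoc, ← ENNReal.ofReal_mul (by positivity)]
    _ ≤ ENNReal.ofReal ((2 * C1 * (sd + 1) * Ar + 1) * σ) * M := by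
        refine mul_le_mul_left (ENNReal.ofReal_le_ofReal ?_) _
        nlinarith
  -- done

/-- Sublemma 4.2, second part.  Let `β` be Schwartz with `F β` supported in the ball of
radius `1/4`, and let `B_k` be convolution with `2^{kd}(Fβ)(2^k·)`.  Then for `s ≥ 0`,
`k ≥ 0`, and the dyadic martingale difference `D_k = E_{k+1} - E_k`,
`|D_k B_{k-s} f(x)| ≤ C 2^{-s} M f(x)` for a.e. `x`. -/
theorem stmt_8 {d : ℕ} (β : SchwartzMap (Vd d) ℂ)
    (hsupp : Function.support (FT (β : Vd d → ℂ)) ⊆ closedBall 0 (1/4)) :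
    ∃ C : ℝ, 0 < C ∧
      ∀ (s : ℕ) (k : ℕ) (f : Vd d → ℂ), Measurable f →
        LocallyIntegrable f volume →
        ∀ᵐ x : Vd d,
          (‖Ek ((k : ℤ) + 1) (scaledConv (FT (β : Vd d → ℂ)) ((k : ℤ) - s) f) x -
              Ek (k : ℤ) (scaledConv (FT (β : Vd d → ℂ)) ((k : ℤ) - s) f) x‖₊ : ℝ≥0∞) ≤
            ENNReal.ofReal (C * (2:ℝ) ^ (-(s : ℝ))) *
              HLMax (fun y => (‖f y‖₊ : ℝ≥0∞)) x := by
  rcases Nat.eq_zero_or_pos d with hd0 | hd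
  · subst hd0
    refine ⟨1, one_pos, fun s k f hf hloc => Filter.Eventually.of_forall fun x => ?_⟩
    have hcube : ∀ m : ℤ, dyadCube m x = (Set.univ : Set (Vd 0)) := by
      intro m
      ext y
      simp only [dyadCube, Set.mem_setOf_eq, Set.mem_univ, iff_true]
      intro i
      exact i.elim0
    have hEk : ∀ m : ℤ, Ek m (scaledConv (FT (β : Vd 0 → ℂ)) ((k:ℤ) - s) f) x =
        ∫ y in (Set.univ : Set (Vd 0)), scaledConv (FT (β : Vd 0 → ℂ)) ((k:ℤ) - s) f y := by
      intro m
      rw [Ek, hcube]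
      norm_num
    rw [hEk ((k:ℤ)+1), hEk (k:ℤ), sub_self]
    simp
  · obtain ⟨C, hC, hmain⟩ := core hd (SchwartzMap.fourierTransformCLM ℝ β)
    refine ⟨C, hC, fun s k f hf hloc => Filter.Eventually.of_forall fun x => ?_⟩
    rw [FT_eq_fourier β]
    have hexp : (2:ℝ) ^ (-(s:ℝ)) = (2:ℝ) ^ (-(s:ℤ)) := by
      rw [show -(s:ℝ) = ((-(s:ℤ) : ℤ) : ℝ) by push_cast; ring, Real.rpow_intCast]
    rw [hexp]
    exact hmain s k f hf x

end
end
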